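/- arXiv:2309.14699 — 12 statements merged into one kernel-verified Lean document; each statement's English description precedes it below -/
import Mathlib

section
/- Let n ≥ 3, let 1 ≤ r < (n−1)(n−2)/2 + 1, and let 𝔽 be a field whose multiplicative group 𝔽* contains a free abelian subgroup of rank r. Then there exists a multiplicatively antisymmetric n×n matrix 𝔮 = (q_{ij}) over 𝔽 such that the λ-group Λ of 𝔮 is a free abelian group of rank r and such that the quantum affine space 𝒪_𝔮 admits an 𝔽-algebra automorphism that is not scalar; in fact there is an injective group homomorphism from the additive group (𝔽,+) into the group of 𝔽-algebra automorphisms of 𝒪_𝔮 whose non-identity values are non-scalar automorphisms. -/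
/-- The defining relations of the multiparameter quantum affine space:
`X i * X j = q i j • (X j * X i)` for `i < j`. -/
inductive QuantumRel (F : Type*) [Field F] (n : ℕ) (q : Fin n → Fin n → F) :
    FreeAlgebra F (Fin n) → FreeAlgebra F (Fin n) → Prop
  | rel (i j : Fin n) (h : i < j) :
      QuantumRel F n q (FreeAlgebra.ι F i * FreeAlgebra.ι F j)
        (q i j • (FreeAlgebra.ι F j * FreeAlgebra.ι F i))

/-- The multiparameter quantum affine space `𝒪_𝔮`. -/
abbrev QuantumAffineSpace (F : Type*) [Field F] (n : ℕ) (q : Fin n → Fin n → F) :=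
  RingQuot (QuantumRel F n q)

/-- The canonical generators `X i` of the quantum affine space. -/
noncomputable def QX (F : Type*) [Field F] (n : ℕ) (q : Fin n → Fin n → F) (i : Fin n) :
    QuantumAffineSpace F n q :=
  RingQuot.mkAlgHom F (QuantumRel F n q) (FreeAlgebra.ι F i)

/-- A multiplicatively antisymmetric matrix: nonzero entries, `q i i = 1`, `q j i = (q i j)⁻¹`. -/
def MultAntisym (F : Type*) [Field F] {n : ℕ} (q : Fin n → Fin n → F) : Prop :=
  (∀ i j, q i j ≠ 0) ∧ (∀ i, q i i = 1) ∧ (∀ i j, q j i = (q i j)⁻¹)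

/-- An `F`-algebra automorphism of the quantum affine space is scalar if it sends each
generator `X i` to a nonzero scalar multiple of itself. -/
def IsScalarAut (F : Type*) [Field F] (n : ℕ) (q : Fin n → Fin n → F)
    (σ : QuantumAffineSpace F n q ≃ₐ[F] QuantumAffineSpace F n q) : Prop :=
  ∃ a : Fin n → F, (∀ i, a i ≠ 0) ∧ ∀ i, σ (QX F n q i) = a i • QX F n q i

/-- `E = 0`: each set `Λ_i` is empty. -/
def LambdaEmpty (F : Type*) [Field F] {n : ℕ} (q : Fin n → Fin n → F) : Prop :=
  ∀ i : Fin n, ∀ ν : Fin n → ℕ,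
    ¬ (ν i = 0 ∧ ∀ j, j ≠ i → (∏ k, q k j ^ ν k) = q i j)

/-- The `λ`-group: the subgroup of `Fˣ` generated by the multiparameters `q i j`, `i < j`. -/
def lambdaGroup (F : Type*) [Field F] {n : ℕ} (q : Fin n → Fin n → F) : Subgroup Fˣ :=
  Subgroup.closure {u : Fˣ | ∃ i j : Fin n, i < j ∧ (u : F) = q i j}

/-!
If all multiparameters in the row and column of one generator `X k` are `1`, then `X k` is
central and `X k ↦ X k + b` (fixing the other generators) extends to an automorphism; these
shifts form a copy of `(F, +)`, and the augmentation `X i ↦ 0` separates a shift from every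
scalar automorphism. There are `(n - 1)(n - 2)/2` pairs `0 < i < j`, so the `r`
independent units can be placed at distinct such positions (with `1` elsewhere), leaving row
and column `0` trivial; the λ-group is then the group they generate, free abelian of rank `r`.
-/

open Function

namespace QuantumAffineSpace

variable {F : Type*} [Field F] {n : ℕ} {q : Fin n → Fin n → F}

lemma QX_mul_QX {i j : Fin n} (h : i < j) :
    QX F n q i * QX F n q j = q i j • (QX F n q j * QX F n q i) := by
  simpa [QX] using RingQuot.mkAlgHom_rel F (QuantumRel.rel (q := q) i j h)

section Lift

variable {A : Type*} [Semiring A] [Algebra F A]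

noncomputable def lift (x : Fin n → A)
    (hx : ∀ i j, i < j → x i * x j = q i j • (x j * x i)) : QuantumAffineSpace F n q →ₐ[F] A :=
  RingQuot.liftAlgHom F ⟨FreeAlgebra.lift F x, by
    rintro _ _ ⟨i, j, h⟩
    simpa using hx i j h⟩

@[simp]
lemma lift_QX (x : Fin n → A) (hx : ∀ i j, i < j → x i * x j = q i j • (x j * x i))
    (i : Fin n) : lift x hx (QX F n q i) = x i := by
  rw [QX, lift, RingQuot.liftAlgHom_mkAlgHom_apply, FreeAlgebra.lift_ι_apply]

lemma algHom_ext {f g : QuantumAffineSpace F n q →ₐ[F] A}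
    (h : ∀ i, f (QX F n q i) = g (QX F n q i)) : f = g :=
  RingQuot.ringQuot_ext' F f g <| FreeAlgebra.hom_ext <| funext h

end Lift

variable (F n q) in
noncomputable def augmentation : QuantumAffineSpace F n q →ₐ[F] F :=
  lift 0 fun _ _ _ => by simp

@[simp]
lemma augmentation_QX (i : Fin n) : augmentation F n q (QX F n q i) = 0 :=
  lift_QX ..

lemma _root_.IsScalarAut.augmentation_apply_QX
    {σ : QuantumAffineSpace F n q ≃ₐ[F] QuantumAffineSpace F n q}
    (hσ : IsScalarAut F n q σ) (i : Fin n) : augmentation F n q (σ (QX F n q i)) = 0 := by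
  obtain ⟨a, -, ha⟩ := hσ
  simp [ha]

section Shift

variable {k : Fin n} (hrow : ∀ j, k < j → q k j = 1) (hcol : ∀ i, i < k → q i k = 1)
include hrow hcol

lemma commute_QX (j : Fin n) : Commute (QX F n q k) (QX F n q j) := by
  rcases lt_trichotomy k j with h | rfl | h
  · exact (QX_mul_QX h).trans (by rw [hrow j h, one_smul])
  · rfl
  · exact ((QX_mul_QX h).trans (by rw [hcol j h, one_smul])).symm

noncomputable def shiftAlgHom (b : F) :
    QuantumAffineSpace F n q →ₐ[F] QuantumAffineSpace F n q :=
  lift (update (QX F n q) k (QX F n q k + algebraMap F _ b)) fun i j h => by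
    have hcomm (j : Fin n) : Commute (QX F n q k + algebraMap F _ b) (QX F n q j) :=
      (commute_QX hrow hcol j).add_left (Algebra.commutes b _)
    rcases eq_or_ne i k with rfl | hi
    · rw [update_self, update_of_ne h.ne', hrow j h, one_smul]
      exact hcomm j
    rcases eq_or_ne j k with rfl | hj
    · rw [update_self, update_of_ne hi, hcol i h, one_smul]
      exact (hcomm i).symm
    · rw [update_of_ne hi, update_of_ne hj]
      exact QX_mul_QX h

@[simp]
lemma shiftAlgHom_QX_self (b : F) :
    shiftAlgHom hrow hcol b (QX F n q k) = QX F n q k + algebraMap F _ b := by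
  simp [shiftAlgHom]

@[simp]
lemma shiftAlgHom_QX_of_ne (b : F) {i : Fin n} (hi : i ≠ k) :
    shiftAlgHom hrow hcol b (QX F n q i) = QX F n q i := by
  simp [shiftAlgHom, hi]

lemma shiftAlgHom_comp_shiftAlgHom (b c : F) :
    (shiftAlgHom hrow hcol b).comp (shiftAlgHom hrow hcol c) = shiftAlgHom hrow hcol (b + c) := by
  refine algHom_ext fun i => ?_
  rcases eq_or_ne i k with rfl | hi
  · simp [add_assoc]
  · simp [hi]

lemma shiftAlgHom_zero : shiftAlgHom hrow hcol 0 = AlgHom.id F _ := by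
  refine algHom_ext fun i => ?_
  rcases eq_or_ne i k with rfl | hi
  · simp
  · simp [hi]

noncomputable def shiftAlgEquiv (b : F) :
    QuantumAffineSpace F n q ≃ₐ[F] QuantumAffineSpace F n q :=
  AlgEquiv.ofAlgHom (shiftAlgHom hrow hcol b) (shiftAlgHom hrow hcol (-b))
    (by rw [shiftAlgHom_comp_shiftAlgHom, add_neg_cancel, shiftAlgHom_zero])
    (by rw [shiftAlgHom_comp_shiftAlgHom, neg_add_cancel, shiftAlgHom_zero])

noncomputable def shiftHom :
    Multiplicative F →* (QuantumAffineSpace F n q ≃ₐ[F] QuantumAffineSpace F n q) :=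
  MonoidHom.mk' (fun b => shiftAlgEquiv hrow hcol b.toAdd) fun b c => by
    ext x
    simp [shiftAlgEquiv, ← AlgHom.comp_apply, shiftAlgHom_comp_shiftAlgHom, add_comm]

lemma augmentation_shiftHom_QX_self (b : Multiplicative F) :
    augmentation F n q (shiftHom hrow hcol b (QX F n q k)) = b.toAdd := by
  simp [shiftHom, shiftAlgEquiv]

lemma not_isScalarAut_shiftHom {b : Multiplicative F} (hb : b ≠ 1) :
    ¬ IsScalarAut F n q (shiftHom hrow hcol b) := fun hσ =>
  hb <| toAdd_eq_zero.mp <|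
    (augmentation_shiftHom_QX_self hrow hcol b).symm.trans (hσ.augmentation_apply_QX k)

lemma shiftHom_injective : Injective (shiftHom hrow hcol) := by
  refine (injective_iff_map_eq_one _).mpr fun b hb => ?_
  by_contra hb1
  exact not_isScalarAut_shiftHom hrow hcol hb1 (hb ▸ ⟨1, fun _ => one_ne_zero, by simp⟩)

end Shift

end QuantumAffineSpace

section LambdaGroup

variable {F : Type*} [Field F] {n : ℕ}

def ofUpper (w : Fin n × Fin n → Fˣ) (i j : Fin n) : F :=
  if i < j then w (i, j) else if j < i then ↑(w (j, i))⁻¹ else 1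

variable (w : Fin n × Fin n → Fˣ)

lemma ofUpper_of_lt {i j : Fin n} (h : i < j) : ofUpper w i j = w (i, j) := if_pos h

lemma multAntisym_ofUpper : MultAntisym F (ofUpper w) := by
  refine ⟨fun i j => ?_, fun i => by simp [ofUpper], fun i j => ?_⟩
  · unfold ofUpper
    split_ifs <;> simp
  · rcases lt_trichotomy i j with h | rfl | h
    · simp [ofUpper, h, h.not_gt]
    · simp [ofUpper]
    · simp [ofUpper, h, h.not_gt]

lemma lambdaGroup_ofUpper :
    lambdaGroup F (ofUpper w) = Subgroup.closure (w '' {x | x.1 < x.2}) := by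
  unfold lambdaGroup
  congr 1
  ext u
  simp only [Set.mem_image, Prod.exists, Units.ext_iff]
  constructor
  · rintro ⟨i, j, h, hu⟩
    exact ⟨i, j, h, (hu.trans (ofUpper_of_lt w h)).symm⟩
  · rintro ⟨i, j, h, hu⟩
    exact ⟨i, j, h, hu.symm.trans (ofUpper_of_lt w h).symm⟩

end LambdaGroup

lemma Subgroup.closure_image_extend_one {G ι α : Type*} [Group G] {p : ι → α}
    (hp : Injective p) (g : ι → G) {S : Set α} (hS : Set.range p ⊆ S) :
    Subgroup.closure (extend p g (1 : α → G) '' S) = Subgroup.closure (Set.range g) := by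
  refine le_antisymm (Subgroup.closure_le _ |>.mpr ?_) (Subgroup.closure_mono ?_)
  · rintro _ ⟨x, -, rfl⟩
    by_cases hx : ∃ s, p s = x
    · obtain ⟨s, rfl⟩ := hx
      exact Subgroup.subset_closure ⟨s, (hp.extend_apply g (1 : α → G) s).symm⟩
    · rw [extend_apply' g (1 : α → G) x hx]
      exact one_mem _
  · rintro _ ⟨s, rfl⟩
    exact ⟨p s, hS ⟨s, rfl⟩, hp.extend_apply g (1 : α → G) s⟩

section ZPowProd

variable {G ι : Type*} [CommGroup G] [Fintype ι] (g : ι → G)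

def zpowProdHom : Multiplicative (ι → ℤ) →* G where
  toFun a := ∏ i, g i ^ a.toAdd i
  map_one' := by simp
  map_mul' a b := by simp [zpow_add, Finset.prod_mul_distrib]

lemma zpowProdHom_range : (zpowProdHom g).range = Subgroup.closure (Set.range g) := by
  ext x
  rw [Subgroup.mem_closure_range_iff_of_fintype, MonoidHom.mem_range]
  exact ⟨fun ⟨a, ha⟩ => ⟨a.toAdd, ha.symm⟩, fun ⟨a, ha⟩ => ⟨.ofAdd a, ha.symm⟩⟩

lemma zpowProdHom_injective (hg : ∀ a : ι → ℤ, ∏ i, g i ^ a i = 1 → a = 0) :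
    Injective (zpowProdHom g) :=
  (injective_iff_map_eq_one _).mpr fun a ha => toAdd_eq_zero.mp (hg a.toAdd ha)

lemma nonempty_closure_range_mulEquiv (hg : ∀ a : ι → ℤ, ∏ i, g i ^ a i = 1 → a = 0) :
    Nonempty (Subgroup.closure (Set.range g) ≃* Multiplicative (ι → ℤ)) :=
  ⟨(MulEquiv.subgroupCongr (zpowProdHom_range g).symm).trans
    (MonoidHom.ofInjective (zpowProdHom_injective g hg)).symm⟩

end ZPowProd

lemma exists_injective_fin_lt_pairs {m r : ℕ} (h : r ≤ m.choose 2) :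
    ∃ p : Fin r → Fin m × Fin m, Injective p ∧ ∀ s, (p s).1 < (p s).2 := by
  have hcard : Fintype.card (Fin r) ≤ Fintype.card {x : Fin m × Fin m // x.1 < x.2} := by
    rwa [Fintype.card_subtype, Fintype.card_product_filter_lt, Fintype.card_fin,
      Fintype.card_fin]
  obtain ⟨e⟩ := Function.Embedding.nonempty_of_card_le hcard
  exact ⟨fun s => e s, Subtype.val_injective.comp e.injective, fun s => (e s).2⟩

theorem exists_nonscalar_aut_small_lambda_group_general (F : Type*) [Field F]
    (n r : ℕ) (hn : 3 ≤ n) (hrlt : r < (n - 1) * (n - 2) / 2 + 1)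
    (g : Fin r → Fˣ) (hg : ∀ a : Fin r → ℤ, (∏ s, g s ^ a s) = 1 → a = 0) :
    ∃ q : Fin n → Fin n → F, MultAntisym F q ∧
      Nonempty ((lambdaGroup F q) ≃* Multiplicative (Fin r → ℤ)) ∧
      ∃ φ : Multiplicative F →*
          (QuantumAffineSpace F n q ≃ₐ[F] QuantumAffineSpace F n q),
        Function.Injective φ ∧
        ∀ b : Multiplicative F, b ≠ 1 → ¬ IsScalarAut F n q (φ b) := by
  obtain ⟨m, rfl⟩ : ∃ m, n = m + 1 := ⟨n - 1, by omega⟩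
  obtain ⟨p, hp, hlt⟩ := exists_injective_fin_lt_pairs (m := m) (r := r) (by
    rw [Nat.choose_two_right]
    simpa [Nat.lt_succ_iff] using hrlt)
  -- `X 0` is made central by placing the free generators strictly away from row `0`.
  set P : Fin r → Fin (m + 1) × Fin (m + 1) := Prod.map Fin.succ Fin.succ ∘ p
  have hP : Injective P := ((Fin.succ_injective _).prodMap (Fin.succ_injective _)).comp hp
  have hrow (j : Fin (m + 1)) (hj : 0 < j) : ofUpper (F := F) (extend P g 1) 0 j = 1 := by
    have h0 : ¬∃ s, P s = (0, j) := fun ⟨s, hs⟩ => Fin.succ_ne_zero _ (congrArg Prod.fst hs)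
    rw [ofUpper_of_lt _ hj, extend_apply' _ _ _ h0]
    rfl
  have hcol (i : Fin (m + 1)) (hi : i < 0) : ofUpper (F := F) (extend P g 1) i 0 = 1 :=
    absurd hi (Fin.not_lt_zero i)
  refine ⟨_, multAntisym_ofUpper _, ?_, QuantumAffineSpace.shiftHom hrow hcol,
    QuantumAffineSpace.shiftHom_injective hrow hcol,
    fun b hb => QuantumAffineSpace.not_isScalarAut_shiftHom hrow hcol hb⟩
  rw [lambdaGroup_ofUpper, Subgroup.closure_image_extend_one hP]
  · exact nonempty_closure_range_mulEquiv g hg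
  · rintro _ ⟨s, rfl⟩
    exact Fin.succ_lt_succ_iff.mpr (hlt s)

theorem exists_nonscalar_aut_small_lambda_group (F : Type*) [Field F]
    (n r : ℕ) (hn : 3 ≤ n) (hr : 1 ≤ r) (hrlt : r < (n - 1) * (n - 2) / 2 + 1)
    (g : Fin r → Fˣ) (hg : ∀ a : Fin r → ℤ, (∏ s, g s ^ a s) = 1 → a = 0) :
    ∃ q : Fin n → Fin n → F, MultAntisym F q ∧
      Nonempty ((lambdaGroup F q) ≃* Multiplicative (Fin r → ℤ)) ∧
      ∃ φ : Multiplicative F →*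
          (QuantumAffineSpace F n q ≃ₐ[F] QuantumAffineSpace F n q),
        Function.Injective φ ∧
        ∀ b : Multiplicative F, b ≠ 1 → ¬ IsScalarAut F n q (φ b) :=
  exists_nonscalar_aut_small_lambda_group_general F n r hn hrlt g hg
end

section
/- Let 𝔽 be a field and let 𝔮 = (q_{ij}) be a multiplicatively antisymmetric n×n matrix over 𝔽 such that q_{kj} = 1 for all j, for some fixed index k. Then: (1) for every b ∈ 𝔽 there exists an 𝔽-algebra automorphism φ_b of the quantum affine space 𝒪_𝔮 with φ_b(X_k) = X_k + b and φ_b(X_i) = X_i for all i ≠ k; (2) the map b ↦ φ_b is an injective group homomorphism from the additive group (𝔽,+) into the group of 𝔽-algebra automorphisms of 𝒪_𝔮; and (3) for every scalar automorphism τ (given by τ(X_i) = t_iX_i with t_i ∈ 𝔽∖{0}) and every b ∈ 𝔽, the composite τ^{-1}∘φ_b∘τ equals φ_{b'} for some b' ∈ 𝔽. -/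
section aux
variable {F : Type*} [Field F] {n : ℕ} {q : Fin n → Fin n → F}

lemma qRel (i j : Fin n) (h : i < j) :
    QX F n q i * QX F n q j = q i j • (QX F n q j * QX F n q i) := by
  have := RingQuot.mkAlgHom_rel F (QuantumRel.rel (q := q) i j h)
  simpa [QX, map_mul] using this

lemma qext {A : Type*} [Semiring A] [Algebra F A]
    (f g : QuantumAffineSpace F n q →ₐ[F] A)
    (H : ∀ i, f (QX F n q i) = g (QX F n q i)) : f = g := by
  apply RingQuot.ringQuot_ext'
  apply FreeAlgebra.hom_ext
  funext i
  simpa [QX] using H i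

lemma qComm (hq : MultAntisym F q) (k : Fin n) (hk : ∀ j, q k j = 1) (j : Fin n) :
    QX F n q k * QX F n q j = QX F n q j * QX F n q k := by
  rcases lt_trichotomy k j with h | h | h
  · simpa [hk j] using qRel (q := q) k j h
  · rw [h]
  · have h1 : q j k = 1 := by rw [hq.2.2, hk, inv_one]
    have := qRel (q := q) j k h
    rw [h1, one_smul] at this
    exact this.symm

noncomputable def qHomF (k : Fin n) (b : F) : FreeAlgebra F (Fin n) →ₐ[F] QuantumAffineSpace F n q :=
  FreeAlgebra.lift F (fun i =>
    if i = k then QX F n q i + algebraMap F (QuantumAffineSpace F n q) b else QX F n q i)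

lemma qHomF_rel (hq : MultAntisym F q) (k : Fin n) (hk : ∀ j, q k j = 1) (b : F) :
    ∀ ⦃x y⦄, QuantumRel F n q x y → qHomF (q := q) k b x = qHomF (q := q) k b y := by
  rintro x y ⟨i, j, hij⟩
  have hne : i ≠ j := hij.ne
  simp only [qHomF, map_mul, map_smul, FreeAlgebra.lift_ι_apply]
  by_cases hi : i = k
  · subst hi
    have hj : ¬ j = i := fun h => hne h.symm
    simp only [if_true, if_neg hj, hk j, one_smul]
    rw [add_mul, mul_add, qComm hq i hk j, Algebra.commutes]
  · by_cases hj : j = k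
    · subst hj
      have h1 : q i j = 1 := by rw [hq.2.2, hk, inv_one]
      simp only [if_neg hi, if_true, h1, one_smul]
      rw [mul_add, add_mul, qComm hq j hk i, Algebra.commutes]
    · simp only [if_neg hi, if_neg hj]
      exact qRel i j hij

noncomputable def qHom (hq : MultAntisym F q) (k : Fin n) (hk : ∀ j, q k j = 1) (b : F) :
    QuantumAffineSpace F n q →ₐ[F] QuantumAffineSpace F n q :=
  RingQuot.liftAlgHom F ⟨qHomF (q := q) k b, qHomF_rel hq k hk b⟩

lemma qHom_X (hq : MultAntisym F q) (k : Fin n) (hk : ∀ j, q k j = 1) (b : F) (i : Fin n) :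
    qHom hq k hk b (QX F n q i)
      = if i = k then QX F n q i + algebraMap F (QuantumAffineSpace F n q) b else QX F n q i := by
  simp [qHom, QX, RingQuot.liftAlgHom_mkAlgHom_apply, qHomF]

lemma qHom_comp (hq : MultAntisym F q) (k : Fin n) (hk : ∀ j, q k j = 1) (b c : F) :
    (qHom hq k hk b).comp (qHom hq k hk c) = qHom hq k hk (b + c) := by
  apply qext
  intro i
  simp only [AlgHom.comp_apply, qHom_X]
  by_cases hi : i = k
  · subst hi
    simp only [if_true, qHom_X, map_add, AlgHom.commutes]
    abel
  · simp [hi, qHom_X]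

lemma qHom_zero (hq : MultAntisym F q) (k : Fin n) (hk : ∀ j, q k j = 1) :
    qHom hq k hk 0 = AlgHom.id F _ := by
  apply qext
  intro i
  by_cases hi : i = k <;> simp [hi, qHom_X]

noncomputable def qEquiv (hq : MultAntisym F q) (k : Fin n) (hk : ∀ j, q k j = 1) (b : F) :
    QuantumAffineSpace F n q ≃ₐ[F] QuantumAffineSpace F n q :=
  AlgEquiv.ofAlgHom (qHom hq k hk b) (qHom hq k hk (-b))
    (by rw [qHom_comp]; simpa using qHom_zero hq k hk)
    (by rw [qHom_comp]; simpa using qHom_zero hq k hk)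

lemma qEquiv_apply (hq : MultAntisym F q) (k : Fin n) (hk : ∀ j, q k j = 1) (b : F) (x) :
    qEquiv hq k hk b x = qHom hq k hk b x := rfl

lemma qeqext (g h : QuantumAffineSpace F n q ≃ₐ[F] QuantumAffineSpace F n q)
    (H : ∀ i, g (QX F n q i) = h (QX F n q i)) : g = h := by
  apply AlgEquiv.coe_algHom_injective
  exact qext _ _ H

/-- counit -/
noncomputable def qCounit : QuantumAffineSpace F n q →ₐ[F] F :=
  RingQuot.liftAlgHom F ⟨FreeAlgebra.lift F (fun _ => (0 : F)), by
    rintro x y ⟨i, j, hij⟩; simp [map_mul, FreeAlgebra.lift_ι_apply]⟩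

lemma qAlgebraMap_inj : Function.Injective (algebraMap F (QuantumAffineSpace F n q)) := by
  intro a b h
  have := congrArg (qCounit (q := q)) h
  simpa [AlgHom.commutes] using this

end aux

theorem embeds_additive_group_of_row_one (F : Type*) [Field F]
    (n : ℕ) (q : Fin n → Fin n → F) (hq : MultAntisym F q)
    (k : Fin n) (hk : ∀ j : Fin n, q k j = 1) :
    ∃ φ : Multiplicative F →*
        (QuantumAffineSpace F n q ≃ₐ[F] QuantumAffineSpace F n q),
      Function.Injective φ ∧
      (∀ b : F,
        (φ (Multiplicative.ofAdd b)) (QX F n q k)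
            = QX F n q k + algebraMap F (QuantumAffineSpace F n q) b ∧
        ∀ i : Fin n, i ≠ k → (φ (Multiplicative.ofAdd b)) (QX F n q i) = QX F n q i) ∧
      (∀ τ : QuantumAffineSpace F n q ≃ₐ[F] QuantumAffineSpace F n q,
        IsScalarAut F n q τ → ∀ b : F, ∃ b' : F,
          τ⁻¹ * φ (Multiplicative.ofAdd b) * τ = φ (Multiplicative.ofAdd b')) := by
  classical
  refine ⟨{ toFun := fun b => qEquiv hq k hk b.toAdd,
            map_one' := ?_, map_mul' := ?_ }, ?_, ?_, ?_⟩
  · apply qeqext; intro i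
    simp [qEquiv_apply, qHom_X, AlgHom.congr_fun (qHom_zero hq k hk) (QX F n q i)]
  · intro b c
    apply qeqext; intro i
    have h1 : (qEquiv hq k hk (b * c).toAdd) (QX F n q i)
        = qHom hq k hk (b.toAdd + c.toAdd) (QX F n q i) := rfl
    have h2 : (qEquiv hq k hk b.toAdd * qEquiv hq k hk c.toAdd) (QX F n q i)
        = qHom hq k hk b.toAdd (qHom hq k hk c.toAdd (QX F n q i)) := rfl
    rw [h1, h2, ← AlgHom.comp_apply, qHom_comp]
  · intro b c h
    have h2 := congrArg (fun e : QuantumAffineSpace F n q ≃ₐ[F] QuantumAffineSpace F n q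
        => e (QX F n q k)) h
    simp only [MonoidHom.coe_mk, OneHom.coe_mk, qEquiv_apply, qHom_X, if_pos rfl] at h2
    have h3 : algebraMap F (QuantumAffineSpace F n q) b.toAdd
        = algebraMap F (QuantumAffineSpace F n q) c.toAdd := by
      exact add_left_cancel h2
    exact Multiplicative.toAdd.injective (qAlgebraMap_inj h3)
  · intro b
    constructor
    · show qHom hq k hk _ (QX F n q k) = _
      simp [qHom_X]
    · intro i hi
      show qHom hq k hk _ (QX F n q i) = _
      simp [qHom_X, hi]
  · rintro τ ⟨a, ha0, ha⟩ b
    refine ⟨a k * b, ?_⟩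
    simp only [MonoidHom.coe_mk, OneHom.coe_mk]
    apply qeqext; intro i
    have hsymm : ∀ i, τ.symm (a i • QX F n q i) = QX F n q i := fun i => by
      rw [← ha i, AlgEquiv.symm_apply_apply]
    have hL : (τ⁻¹ * qEquiv hq k hk (Multiplicative.ofAdd b).toAdd * τ) (QX F n q i)
        = τ.symm (qHom hq k hk b (τ (QX F n q i))) := rfl
    rw [hL, ha i, map_smul]
    by_cases hi : i = k
    · subst hi
      rw [qHom_X, if_pos rfl, smul_add, map_add, hsymm]
      show _ = qHom hq i hk (a i * b) (QX F n q i)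
      rw [qHom_X, if_pos rfl]
      congr 1
      rw [Algebra.smul_def, ← map_mul]
      exact (τ.symm.commutes _)
    · rw [qHom_X, if_neg hi, hsymm]
      show _ = qHom hq k hk (a k * b) (QX F n q i)
      rw [qHom_X, if_neg hi]
end

section
/- Let 𝔽 be a field with char 𝔽 ≠ 2 and let 𝔮 = (q_{ij}) be a multiplicatively antisymmetric n×n matrix over 𝔽 with q_{ij} ≠ 1 for all 1 ≤ i < j ≤ n. Then every linear 𝔽-algebra automorphism σ of the quantum affine space 𝒪_𝔮 (i.e. one for which each σ(X_i) lies in the 𝔽-linear span of X_1,…,X_n) is of the form σ(X_i) = k_i X_{τ(i)} for all i, for some permutation τ of {1,…,n} and some scalars k_1,…,k_n ∈ 𝔽∖{0}. -/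
noncomputable def psiFree (F : Type*) [Field F] (n : ℕ) (k : Fin n) :
    FreeAlgebra F (Fin n) →ₐ[F] F :=
  FreeAlgebra.lift F (fun a => if a = k then (1:F) else 0)

theorem psiFree_rel (F : Type*) [Field F] (n : ℕ) (q : Fin n → Fin n → F) (k : Fin n) :
    ∀ ⦃x y⦄, QuantumRel F n q x y → psiFree F n k x = psiFree F n k y := by
  rintro x y ⟨i, j, hij⟩
  by_cases hi : i = k <;> by_cases hj : j = k <;>
    simp [psiFree, hi, hj, (hij.ne : i ≠ j)] <;>
    first | rfl | (exfalso; exact hij.ne (hi.trans hj.symm))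

noncomputable def psiAux (F : Type*) [Field F] (n : ℕ) (q : Fin n → Fin n → F) (k : Fin n) :
    QuantumAffineSpace F n q →ₐ[F] F :=
  RingQuot.liftAlgHom F ⟨psiFree F n k, psiFree_rel F n q k⟩

theorem psiAux_QX (F : Type*) [Field F] (n : ℕ) (q : Fin n → Fin n → F) (k i : Fin n) :
    psiAux F n q k (QX F n q i) = if i = k then 1 else 0 := by
  rw [psiAux, QX, RingQuot.liftAlgHom_mkAlgHom_apply]
  simp [psiFree]

theorem QX_rel (F : Type*) [Field F] (n : ℕ) (q : Fin n → Fin n → F) {i j : Fin n} (h : i < j) :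
    QX F n q i * QX F n q j = q i j • (QX F n q j * QX F n q i) := by
  have := RingQuot.mkAlgHom_rel F (QuantumRel.rel (q := q) i j h)
  simpa [QX, map_mul, map_smul] using this

theorem linear_aut_is_monomial (F : Type*) [Field F] (hchar : ringChar F ≠ 2)
    (n : ℕ) (q : Fin n → Fin n → F) (hq : MultAntisym F q)
    (hq1 : ∀ i j : Fin n, i < j → q i j ≠ 1)
    (σ : QuantumAffineSpace F n q ≃ₐ[F] QuantumAffineSpace F n q)
    (hlin : ∀ i : Fin n, σ (QX F n q i) ∈ Submodule.span F (Set.range (QX F n q))) :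
    ∃ (τ : Equiv.Perm (Fin n)) (c : Fin n → F), (∀ i, c i ≠ 0) ∧
      ∀ i : Fin n, σ (QX F n q i) = c i • QX F n q (τ i) := by
  classical
  choose M hM using fun i => (Submodule.mem_span_range_iff_exists_fun F).mp (hlin i)
  have hpsi : ∀ i k, psiAux F n q k (σ (QX F n q i)) = M i k := by
    intro i k
    rw [← hM i, map_sum]
    rw [Finset.sum_eq_single k]
    · simp [psiAux_QX]
    · intro b _ hb
      simp [psiAux_QX, hb]
    · simp
  have hdisj : ∀ i j : Fin n, i ≠ j → ∀ k, M i k * M j k = 0 := by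
    have key : ∀ i j : Fin n, i < j → ∀ k, M i k * M j k = 0 := by
      intro i j hij k
      have hrel := QX_rel F n q hij
      have h2 : σ (QX F n q i) * σ (QX F n q j)
          = q i j • (σ (QX F n q j) * σ (QX F n q i)) := by
        rw [← map_mul, ← map_mul, ← map_smul, hrel]
      have h3 := congrArg (psiAux F n q k) h2
      simp only [map_mul, map_smul, hpsi, smul_eq_mul] at h3
      have h4 : M i k * M j k * (1 - q i j) = 0 := by linear_combination h3
      rcases mul_eq_zero.mp h4 with h | h
      · exact h
      · exact absurd (by linear_combination -h) (hq1 i j hij)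
    intro i j hij k
    rcases hij.lt_or_gt with h | h
    · exact key i j h k
    · rw [mul_comm]; exact key j i h k
  have hrow : ∀ i : Fin n, ∃ k, M i k ≠ 0 := by
    intro i
    by_contra h
    push_neg at h
    have hz : σ (QX F n q i) = 0 := by
      rw [← hM i]; simp [h]
    have hQ : QX F n q i = 0 := σ.injective (hz.trans (map_zero σ).symm)
    have h1 := psiAux_QX F n q i i
    rw [hQ, map_zero, if_pos rfl] at h1
    exact one_ne_zero h1.symm
  choose f hf using hrow
  have hinj : Function.Injective f := by
    intro i j hij
    by_contra h
    rcases mul_eq_zero.mp (hdisj i j h (f j)) with h1 | h1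
    · exact hf i (by rw [hij]; exact h1)
    · exact hf j h1
  have hbij : Function.Bijective f := Finite.injective_iff_bijective.mp hinj
  refine ⟨Equiv.ofBijective f hbij, fun i => M i (f i), fun i => hf i, fun i => ?_⟩
  rw [← hM i]
  rw [Finset.sum_eq_single (f i)]
  · rfl
  · intro k _ hk
    obtain ⟨j, hj⟩ := hbij.surjective k
    have hji : i ≠ j := by rintro rfl; exact hk hj.symm
    have hMik : M i k = 0 := by
      rcases mul_eq_zero.mp (hdisj i j hji k) with h | h
      · exact h
      · exact absurd (hj ▸ h) (hf j)
    rw [hMik, zero_smul]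
  · simp
end

section
/- Let 𝔽 be a field with char 𝔽 ≠ 2 and let 𝔮 = (q_{ij}) be a multiplicatively antisymmetric n×n matrix over 𝔽 with q_{ij} ≠ 1 for all 1 ≤ i < j ≤ n. Suppose A = (α_{ij}) is an invertible n×n matrix over 𝔽 satisfying α_{ik}α_{jl}(1 − q_{ij}q_{lk}) = α_{il}α_{jk}(q_{ij} − q_{lk}) for all i < j and all k ≤ l. Then every row of A and every column of A has exactly one nonzero entry (i.e. A is a generalized permutation matrix). -/
namespace Matrix

variable {n R : Type*} [Fintype n] [DecidableEq n] [CommRing R] [Nontrivial R]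

theorem exists_ne_zero_of_isUnit_col {A : Matrix n n R} (hA : IsUnit A) (k : n) :
    ∃ i, A i k ≠ 0 := by
  by_contra! h
  exact (isUnit_iff_isUnit_det A).1 hA |>.ne_zero (det_eq_zero_of_column_eq_zero k h)

theorem exists_ne_zero_of_isUnit_row {A : Matrix n n R} (hA : IsUnit A) (i : n) :
    ∃ k, A i k ≠ 0 := by
  by_contra! h
  exact (isUnit_iff_isUnit_det A).1 hA |>.ne_zero (det_eq_zero_of_row_eq_zero i h)

theorem existsUnique_ne_zero_of_isUnit_of_col_subsingleton {A : Matrix n n R} (hA : IsUnit A)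
    (hcol : ∀ k i j, A i k ≠ 0 → A j k ≠ 0 → i = j) :
    (∀ i, ∃! k, A i k ≠ 0) ∧ ∀ k, ∃! i, A i k ≠ 0 := by
  choose σ hσ using exists_ne_zero_of_isUnit_col hA
  have hσ_surj : σ.Surjective := fun i ↦
    let ⟨k, hk⟩ := exists_ne_zero_of_isUnit_row hA i
    ⟨k, hcol k _ _ (hσ k) hk⟩
  have hσ_inj : σ.Injective := Finite.injective_iff_surjective.2 hσ_surj
  refine ⟨fun i ↦ ?_, fun k ↦ ⟨σ k, hσ k, fun i hi ↦ hcol k _ _ hi (hσ k)⟩⟩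
  obtain ⟨k, rfl⟩ := hσ_surj i
  exact ⟨k, hσ k, fun l hl ↦ hσ_inj (hcol l _ _ (hσ l) hl)⟩

end Matrix

theorem eq_zero_of_mul_one_sub_eq_mul_sub_one {F : Type*} [Field F] (hchar : ringChar F ≠ 2)
    {q x : F} (hq : q ≠ 1) (h : x * (1 - q) = x * (q - 1)) : x = 0 := by
  have h2 : (2 : F) * (q - 1) ≠ 0 := mul_ne_zero (Ring.two_ne_zero hchar) (sub_ne_zero.2 hq)
  have : x * (2 * (q - 1)) = 0 := by linear_combination -h
  exact (mul_eq_zero.1 this).resolve_right h2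

theorem generalized_perm_matrix_of_alev_chamarie_relations (F : Type*) [Field F]
    (hchar : ringChar F ≠ 2) (n : ℕ) (q : Fin n → Fin n → F) (hq : MultAntisym F q)
    (hq1 : ∀ i j : Fin n, i < j → q i j ≠ 1)
    (A : Matrix (Fin n) (Fin n) F) (hA : IsUnit A)
    (hrel : ∀ i j k l : Fin n, i < j → k ≤ l →
      A i k * A j l * (1 - q i j * q l k) = A i l * A j k * (q i j - q l k)) :
    (∀ i : Fin n, ∃! j : Fin n, A i j ≠ 0) ∧ (∀ j : Fin n, ∃! i : Fin n, A i j ≠ 0) := by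
  refine Matrix.existsUnique_ne_zero_of_isUnit_of_col_subsingleton hA fun k i j hi hj ↦ ?_
  by_contra hne
  wlog hij : i < j generalizing i j
  · exact this j i hj hi (Ne.symm hne) ((not_lt.1 hij).lt_of_ne (Ne.symm hne))
  have h := hrel i j k k hij le_rfl
  rw [hq.2.1 k, mul_one] at h
  exact mul_ne_zero hi hj (eq_zero_of_mul_one_sub_eq_mul_sub_one hchar (hq1 i j hij) h)
end

section
/- Let 𝔽 be a field and let 𝔮 = (q_{ij}) be a multiplicatively antisymmetric n×n matrix over 𝔽 such that q_{ij}² ≠ 1 for all 1 ≤ i < j ≤ n (i.e. no q_{ij} equals 1 or −1). If σ is a permutation of {1,…,n} satisfying q_{ij} = q_{σ(i)σ(j)} for all 1 ≤ i < j ≤ n, then every orbit of σ on {1,…,n} has odd cardinality; in particular, every cycle occurring in the cycle decomposition of σ has odd length. -/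
theorem orbits_odd_of_perm_symmetry (F : Type*) [Field F]
    (n : ℕ) (q : Fin n → Fin n → F) (hq : MultAntisym F q)
    (hq2 : ∀ i j : Fin n, i < j → q i j ^ 2 ≠ 1)
    (σ : Equiv.Perm (Fin n)) (hσ : ∀ i j : Fin n, i < j → q i j = q (σ i) (σ j)) :
    ∀ i : Fin n, Odd ((Set.range fun m : ℤ => (σ ^ m) i).ncard) := by
  intro i
  -- one-step invariance for all distinct pairs
  have hstep : ∀ a b : Fin n, a ≠ b → q a b = q (σ a) (σ b) := by
    intro a b hab
    rcases lt_or_gt_of_ne hab with h | h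
    · exact hσ a b h
    · rw [hq.2.2 b a, hq.2.2 (σ b) (σ a), hσ b a h]
  -- iterated invariance
  have hiter : ∀ (m : ℕ) (a b : Fin n), a ≠ b → q a b = q ((σ ^ m) a) ((σ ^ m) b) := by
    intro m
    induction m with
    | zero => simp
    | succ m ih =>
      intro a b hab
      have hne : (σ ^ m) a ≠ (σ ^ m) b := fun h => hab ((σ ^ m).injective h)
      rw [pow_succ']
      simpa using (ih a b hab).trans (hstep _ _ hne)
  set k := Function.minimalPeriod σ i with hk
  have ho : 0 < orderOf σ := orderOf_pos σ
  have hper : i ∈ Function.periodicPts σ := by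
    refine ⟨orderOf σ, ho, ?_⟩
    show σ^[orderOf σ] i = i
    rw [← Equiv.Perm.coe_pow, pow_orderOf_eq_one]; rfl
  have hkpos : 0 < k := Function.minimalPeriod_pos_of_mem_periodicPts hper
  -- the orbit as an image of `Finset.range k`
  have hset : (Set.range fun m : ℤ => (σ ^ m) i)
      = (fun m : ℕ => σ^[m] i) '' ↑(Finset.range k) := by
    ext x
    constructor
    · rintro ⟨m, rfl⟩
      have h1 : (σ : Equiv.Perm (Fin n)) ^ m = σ ^ (((m % (orderOf σ : ℤ)).toNat : ℕ) : ℤ) := by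
        rw [Int.toNat_of_nonneg (Int.emod_nonneg m (by exact_mod_cast ho.ne'))]
        rw [zpow_mod_orderOf]
      refine ⟨(m % (orderOf σ : ℤ)).toNat % k, ?_, ?_⟩
      · simp [Nat.mod_lt _ hkpos]
      · show σ^[_] i = _
        rw [Function.iterate_mod_minimalPeriod_eq, ← Equiv.Perm.coe_pow, ← zpow_natCast, ← h1]
    · rintro ⟨m, _, rfl⟩
      exact ⟨(m : ℤ), by show (σ ^ (m : ℤ)) i = _; rw [zpow_natCast, Equiv.Perm.coe_pow]⟩
  have hcard : (Set.range fun m : ℤ => (σ ^ m) i).ncard = k := by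
    rw [hset, Set.ncard_image_of_injOn, Set.ncard_coe_finset, Finset.card_range]
    intro a ha b hb hab
    exact Function.iterate_injOn_Iio_minimalPeriod (by simpa using ha) (by simpa using hb) hab
  rw [hcard]
  by_contra hodd
  rw [Nat.not_odd_iff_even] at hodd
  obtain ⟨d, hd⟩ := hodd
  have hdpos : 0 < d := by omega
  have hdk : d < k := by omega
  set j := (σ ^ d) i with hj
  have hij : i ≠ j := by
    intro h
    have : Function.IsPeriodicPt σ d i := by
      show σ^[d] i = i
      exact h.symm
    exact absurd (this.minimalPeriod_le hdpos) (by omega)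
  have hki : (σ ^ k) i = i := by
    have := Function.isPeriodicPt_minimalPeriod σ i
    rw [← hk] at this
    exact this
  have hdj : (σ ^ d) j = i := by
    rw [hj, ← Equiv.Perm.mul_apply, ← pow_add, ← hd, hki]
  have h1 : q i j = q j i := by
    have := hiter d i j hij
    rw [hdj, ← hj] at this
    exact this
  have h2 : q i j ^ 2 = 1 := by
    rw [hq.2.2 i j] at h1
    rw [sq]
    nth_rewrite 2 [h1]
    rw [mul_inv_cancel₀ (hq.1 i j)]
  rcases lt_or_gt_of_ne hij with h | h
  · exact hq2 i j h h2
  · refine hq2 j i h ?_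
    rw [hq.2.2 i j, inv_pow, h2, inv_one]
end

section
/- Let 𝔽 be a field, let l ≥ 1, and let p_1,…,p_l ∈ 𝔽∖{0} be multiplicatively independent (i.e. p_1^{a_1}⋯p_l^{a_l} = 1 with a_s ∈ ℤ forces a_1 = ⋯ = a_l = 0). For each pair (i,j) with 1 ≤ i < j ≤ n let m_{(ij),1},…,m_{(ij),l} ∈ ℤ be given, and let λ : ℤ^n × ℤ^n → 𝔽∖{0} be the alternating bicharacter determined by λ(e_i,e_j) = ∏_{s=1}^l p_s^{m_{(ij),s}} for i < j, i.e. λ(γ,γ') = ∏_{i<j} (∏_s p_s^{m_{(ij),s}})^{γ_iγ'_j − γ_jγ'_i}. Then for every A ∈ GL(n,ℤ), the transpose Aᵗ preserves λ (i.e. λ(Aᵗγ, Aᵗγ') = λ(γ,γ') for all γ,γ' ∈ ℤ^n) if and only if for every pair i < j and every s ∈ {1,…,l} one has Σ_{u<v} (A_{iu}A_{jv} − A_{iv}A_{ju}) m_{(uv),s} = m_{(ij),s}; that is, if and only if the exterior square ∧²A fixes every column of the exponent matrix M = (m_{(ij),s}). -/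
/-!
Write `λ(γ, γ') = ∏ s, p s ^ (γ ⬝ᵥ K s *ᵥ γ')`, where `K s` is the alternating matrix
whose entries above the diagonal are `m · · s`. By multiplicative independence of the `p s`,
`Aᵀ` preserves `λ` iff the bilinear forms agree, i.e. iff `A * K s * Aᵀ = K s` for every `s`.
Both sides are alternating, so it suffices to compare the entries `(i, j)` with `i < j`, and
that entry of `A * K s * Aᵀ` is the `(ij)` row of `∧²A` applied to the `s`-th column of `M`.
-/

/-- The alternating bicharacter on `ℤ^n` with `λ(e i, e j) = ∏ s, p s ^ m i j s` for `i < j`. -/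
def bicharOfExponents {F : Type*} [Field F] {l n : ℕ} (p : Fin l → Fˣ)
    (m : Fin n → Fin n → Fin l → ℤ) (γ γ' : Fin n → ℤ) : Fˣ :=
  ∏ i : Fin n, ∏ j : Fin n,
    if i < j then (∏ s : Fin l, p s ^ m i j s) ^ (γ i * γ' j - γ j * γ' i) else 1

lemma zpow_sum {G ι : Type*} [CommGroup G] (x : G) (s : Finset ι) (f : ι → ℤ) :
    x ^ (∑ i ∈ s, f i) = ∏ i ∈ s, x ^ f i := by
  induction s using Finset.cons_induction with
  | empty => simp
  | cons a s ha ih => rw [Finset.sum_cons, Finset.prod_cons, zpow_add, ih]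

lemma prod_zpow_eq_prod_zpow_iff {G ι : Type*} [CommGroup G] [Fintype ι] {p : ι → G}
    (hp : ∀ a : ι → ℤ, ∏ s, p s ^ a s = 1 → a = 0) {a b : ι → ℤ} :
    ∏ s, p s ^ a s = ∏ s, p s ^ b s ↔ a = b := by
  refine ⟨fun hab => sub_eq_zero.mp (hp (a - b) ?_), fun h => by rw [h]⟩
  simpa only [Pi.sub_apply, zpow_sub, ← div_eq_mul_inv, Finset.prod_div_distrib] using
    div_eq_one.mpr hab

namespace Matrix

variable {ι R : Type*}

lemma transpose_mulVec_dotProduct_mulVec_transpose_mulVec [Fintype ι] [CommRing R]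
    (A B : Matrix ι ι R) (x y : ι → R) :
    (Aᵀ *ᵥ x) ⬝ᵥ B *ᵥ (Aᵀ *ᵥ y) = x ⬝ᵥ (A * B * Aᵀ) *ᵥ y := by
  rw [mulVec_transpose A x, ← mulVec_mulVec, ← mulVec_mulVec, dotProduct_mulVec x A]

lemma forall_dotProduct_mulVec_eq_iff [Fintype ι] [DecidableEq ι] [NonAssocSemiring R]
    {B C : Matrix ι ι R} :
    (∀ x y : ι → R, x ⬝ᵥ B *ᵥ y = x ⬝ᵥ C *ᵥ y) ↔ B = C := by
  refine ⟨fun h => ext fun i j => ?_, fun h _ _ => by rw [h]⟩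
  simpa [mulVec_single_one, single_one_dotProduct] using h (Pi.single i 1) (Pi.single j 1)

variable [LinearOrder ι]

def strictUpper [Zero R] (c : ι → ι → R) : Matrix ι ι R :=
  of fun i j => if i < j then c i j else 0

def skewOfUpper [AddGroup R] (c : ι → ι → R) : Matrix ι ι R :=
  strictUpper c - (strictUpper c)ᵀ

section AddGroup

variable [AddGroup R]

lemma skewOfUpper_apply (c : ι → ι → R) (i j : ι) :
    skewOfUpper c i j = (if i < j then c i j else 0) - if j < i then c j i else 0 :=
  rfl

lemma transpose_skewOfUpper (c : ι → ι → R) : (skewOfUpper c)ᵀ = -skewOfUpper c := by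
  rw [skewOfUpper, transpose_sub, transpose_transpose, neg_sub]

lemma eq_skewOfUpper_iff [IsAddTorsionFree R] {B : Matrix ι ι R} (hB : Bᵀ = -B)
    (c : ι → ι → R) : B = skewOfUpper c ↔ ∀ i j, i < j → B i j = c i j := by
  refine ⟨fun h i j hij => by simp [h, skewOfUpper_apply, hij, not_lt_of_gt hij], fun h => ?_⟩
  have hB' (i j : ι) : B j i = -B i j := congrFun (congrFun hB i) j
  ext i j
  rcases lt_trichotomy i j with hij | rfl | hij
  · simp [skewOfUpper_apply, hij, not_lt_of_gt hij, h i j hij]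
  · simpa [skewOfUpper_apply, self_eq_neg] using hB' i i
  · simp [skewOfUpper_apply, hij, not_lt_of_gt hij, hB' j i, h j i hij]

end AddGroup

variable [Fintype ι] [CommRing R]

lemma dotProduct_skewOfUpper_mulVec (c : ι → ι → R) (x y : ι → R) :
    x ⬝ᵥ skewOfUpper c *ᵥ y =
      ∑ u, ∑ v, if u < v then (x u * y v - x v * y u) * c u v else 0 := by
  have hU (x y : ι → R) :
      x ⬝ᵥ strictUpper c *ᵥ y = ∑ u, ∑ v, if u < v then x u * y v * c u v else 0 := by
    simp only [dotProduct, mulVec, strictUpper, of_apply, Finset.mul_sum]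
    refine Finset.sum_congr rfl fun u _ => Finset.sum_congr rfl fun v _ => ?_
    split_ifs <;> ring
  rw [skewOfUpper, sub_mulVec, dotProduct_sub, dotProduct_transpose_mulVec, hU, hU,
    ← Finset.sum_sub_distrib]
  refine Finset.sum_congr rfl fun u _ => ?_
  rw [← Finset.sum_sub_distrib]
  refine Finset.sum_congr rfl fun v _ => ?_
  split_ifs <;> ring

lemma mul_skewOfUpper_mul_transpose_apply (A : Matrix ι ι R) (c : ι → ι → R) (i j : ι) :
    (A * skewOfUpper c * Aᵀ) i j =
      ∑ u, ∑ v, if u < v then (A i u * A j v - A i v * A j u) * c u v else 0 := by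
  rw [mul_mul_apply, transpose_transpose, dotProduct_skewOfUpper_mulVec]

lemma transpose_mul_skewOfUpper_mul_transpose (A : Matrix ι ι R) (c : ι → ι → R) :
    (A * skewOfUpper c * Aᵀ)ᵀ = -(A * skewOfUpper c * Aᵀ) := by
  rw [transpose_mul, transpose_mul, transpose_transpose, transpose_skewOfUpper,
    Matrix.neg_mul, Matrix.mul_neg, Matrix.mul_assoc]

end Matrix

open Matrix

lemma bicharOfExponents_eq_prod_zpow {F : Type*} [Field F] {l n : ℕ} (p : Fin l → Fˣ)
    (m : Fin n → Fin n → Fin l → ℤ) (γ γ' : Fin n → ℤ) :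
    bicharOfExponents p m γ γ' = ∏ s, p s ^ (γ ⬝ᵥ skewOfUpper (m · · s) *ᵥ γ') := by
  have hfactor (i j : Fin n) :
      (if i < j then (∏ s, p s ^ m i j s) ^ (γ i * γ' j - γ j * γ' i) else 1) =
        ∏ s, p s ^ (if i < j then (γ i * γ' j - γ j * γ' i) * m i j s else 0) := by
    split_ifs
    · simp only [← Finset.prod_zpow, ← _root_.zpow_mul, mul_comm (m i j _)]
    · simp
  simp only [bicharOfExponents, hfactor, dotProduct_skewOfUpper_mulVec, zpow_sum]
  exact (Finset.prod_congr rfl fun i _ => Finset.prod_comm).trans Finset.prod_comm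

theorem transpose_preserves_bichar_iff_extSquare_fixes_columns_general
    (F : Type*) [Field F] (l : ℕ) (p : Fin l → Fˣ)
    (hp : ∀ a : Fin l → ℤ, (∏ s, p s ^ a s) = 1 → a = 0)
    (n : ℕ) (m : Fin n → Fin n → Fin l → ℤ)
    (A : Matrix (Fin n) (Fin n) ℤ) :
    (∀ γ γ' : Fin n → ℤ,
        bicharOfExponents p m (A.transpose.mulVec γ) (A.transpose.mulVec γ')
          = bicharOfExponents p m γ γ') ↔
      (∀ i j : Fin n, i < j → ∀ s : Fin l,
        (∑ u : Fin n, ∑ v : Fin n,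
          if u < v then (A i u * A j v - A i v * A j u) * m u v s else 0) = m i j s) := by
  have hpreserve_iff : (∀ γ γ' : Fin n → ℤ,
      bicharOfExponents p m (Aᵀ *ᵥ γ) (Aᵀ *ᵥ γ') = bicharOfExponents p m γ γ') ↔
        ∀ s, A * skewOfUpper (m · · s) * Aᵀ = skewOfUpper (m · · s) := by
    simp only [bicharOfExponents_eq_prod_zpow, transpose_mulVec_dotProduct_mulVec_transpose_mulVec,
      prod_zpow_eq_prod_zpow_iff hp, funext_iff, ← forall_dotProduct_mulVec_eq_iff]
    exact ⟨fun h s γ γ' => h γ γ' s, fun h γ γ' s => h s γ γ'⟩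
  simp only [hpreserve_iff, eq_skewOfUpper_iff (transpose_mul_skewOfUpper_mul_transpose _ _),
    mul_skewOfUpper_mul_transpose_apply]
  exact ⟨fun h i j hij s => h s i j hij, fun h s i j hij => h i j hij s⟩

theorem transpose_preserves_bichar_iff_extSquare_fixes_columns
    (F : Type*) [Field F] (l : ℕ) (hl : 1 ≤ l) (p : Fin l → Fˣ)
    (hp : ∀ a : Fin l → ℤ, (∏ s, p s ^ a s) = 1 → a = 0)
    (n : ℕ) (m : Fin n → Fin n → Fin l → ℤ)
    (A : Matrix (Fin n) (Fin n) ℤ) (hA : IsUnit A.det) :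
    (∀ γ γ' : Fin n → ℤ,
        bicharOfExponents p m (A.transpose.mulVec γ) (A.transpose.mulVec γ')
          = bicharOfExponents p m γ γ') ↔
      (∀ i j : Fin n, i < j → ∀ s : Fin l,
        (∑ u : Fin n, ∑ v : Fin n,
          if u < v then (A i u * A j v - A i v * A j u) * m u v s else 0) = m i j s) :=
  transpose_preserves_bichar_iff_extSquare_fixes_columns_general F l p hp n m A
end

section
/- Let n ≥ 3 and let π be a non-identity permutation of {1,…,n}. Let ∧²P be the ℤ-linear endomorphism of the second exterior power ⋀²(ℤ^n) (a free ℤ-module of rank C(n,2) with basis {e_i∧e_j : i < j}) determined by ∧²P(e_i∧e_j) = e_{π(i)}∧e_{π(j)}. Then the ℤ-submodule Fix(∧²P) = {w ∈ ⋀²(ℤ^n) : ∧²P(w) = w} has rank strictly less than (n−1)(n−2)/2 + 1. -/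
/-- The `ℤ`-linear endomorphism of `ℤ^n` sending the basis vector `e i` to `e (π i)`. -/
noncomputable def permLinearMap (n : ℕ) (π : Equiv.Perm (Fin n)) :
    (Fin n → ℤ) →ₗ[ℤ] (Fin n → ℤ) :=
  LinearMap.funLeft ℤ ℤ ⇑π⁻¹

/-!
Write `w_ij` for the Plücker coordinates of `w ∈ ⋀²ℤⁿ`; they are antisymmetric in `(i, j)`,
determine `w`, and a fixed vector of `∧²P` satisfies `w_{π i, π j} = w_ij`. Choose `x` with
`π x ≠ x`. Then `w_xj = w_{π x, π j} = w_{π⁻¹ x, π⁻¹ j}`, and one of the two right-hand sides avoids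
the index `x` unless `j = π x = π⁻¹ x`; in that case `w_xj = w_jx = -w_xj`, so `w_xj = 0`.
Hence the coordinates `w_ij` with `i < j` and `i, j ≠ x` determine a fixed vector, and the fixed
module embeds into `ℤ^C(n-1,2)`.
-/

theorem eq_zero_of_antisymm_of_perm_invariant {α G : Type*} [AddCommGroup G] [IsAddTorsionFree G]
    {σ : Equiv.Perm α} {c : α → α → G} {x : α} (hx : σ x ≠ x)
    (hanti : ∀ a b, c b a = -c a b) (hinv : ∀ a b, c (σ a) (σ b) = c a b)
    (hzero : ∀ a b, a ≠ x → b ≠ x → c a b = 0) (a b : α) : c a b = 0 := by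
  have hinv' : ∀ a b, c (σ⁻¹ a) (σ⁻¹ b) = c a b := fun a b => by
    rw [← hinv]; simp
  have hx' : σ⁻¹ x ≠ x := by rwa [Ne, Equiv.Perm.inv_eq_iff_eq, eq_comm]
  have hleft : ∀ b, c x b = 0 := by
    intro b
    by_cases hb : σ b = x
    · by_cases hb' : b = σ x
      · -- `x` and `b` form a 2-cycle of `σ`, so invariance swaps the two arguments
        have h : c x b = -c x b := by
          conv_lhs => rw [← hinv, hb, ← hb']
          exact hanti x b
        exact neg_eq_self.mp h.symm
      · rw [← hinv']
        exact hzero _ _ hx' (by rwa [Ne, Equiv.Perm.inv_eq_iff_eq])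
    · rw [← hinv]
      exact hzero _ _ hx hb
  by_cases ha : a = x
  · exact ha ▸ hleft b
  by_cases hb : b = x
  · rw [hb, hanti, hleft, neg_zero]
  exact hzero a b ha hb

theorem eq_zero_of_antisymm_of_lt {α G : Type*} [LinearOrder α] [AddCommGroup G] [IsAddTorsionFree G]
    {c : α → α → G} {p : α → Prop} (hanti : ∀ a b, c b a = -c a b)
    (hlt : ∀ a b, a < b → p a → p b → c a b = 0) (a b : α) (ha : p a) (hb : p b) : c a b = 0 := by
  rcases lt_trichotomy a b with h | rfl | h
  · exact hlt a b h ha hb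
  · exact neg_eq_self.mp (hanti a a).symm
  · rw [hanti, hlt b a h hb ha, neg_zero]

open Module

namespace exteriorPower

variable {R M N : Type*} [CommRing R] [AddCommGroup M] [Module R M] [AddCommGroup N] [Module R N]

theorem coe_map (k : ℕ) (f : M →ₗ[R] N) (w : ⋀[R]^k M) :
    (map k f w : ExteriorAlgebra R N) = ExteriorAlgebra.map f (w : ExteriorAlgebra R M) := by
  have : (⋀[R]^k N).subtype ∘ₗ map k f
      = (ExteriorAlgebra.map f).toLinearMap ∘ₗ (⋀[R]^k M).subtype := by
    apply linearMap_ext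
    ext v
    simp [ExteriorAlgebra.map_apply_ιMulti]
  exact LinearMap.congr_fun this w

theorem rank_eqLocus_inf_exteriorPower (k : ℕ) (f : M →ₗ[R] M) :
    Module.rank R ↥(LinearMap.eqLocus (ExteriorAlgebra.map f).toLinearMap LinearMap.id ⊓ ⋀[R]^k M)
      = Module.rank R (LinearMap.eqLocus (map k f) LinearMap.id) := by
  have h : (LinearMap.eqLocus (ExteriorAlgebra.map f).toLinearMap LinearMap.id ⊓ ⋀[R]^k M).comap
      (⋀[R]^k M).subtype = LinearMap.eqLocus (map k f) LinearMap.id := by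
    ext w
    simp [coe_map, Subtype.ext_iff]
  exact ((Submodule.comapSubtypeEquivOfLe inf_le_right).symm.trans (LinearEquiv.ofEq _ _ h)).rank_eq

theorem pairingDual_ιMulti_map {k : ℕ} (g : Fin k → Dual R N) (f : M →ₗ[R] N) (w : ⋀[R]^k M) :
    pairingDual R N k (ιMulti R k g) (map k f w)
      = pairingDual R M k (ιMulti R k fun i => g i ∘ₗ f) w := by
  have : pairingDual R N k (ιMulti R k g) ∘ₗ map k f
      = pairingDual R M k (ιMulti R k fun i => g i ∘ₗ f) := by
    apply linearMap_ext
    ext v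
    simp
  exact LinearMap.congr_fun this w

theorem eq_zero_of_pairingDual_coord_eq_zero {I : Type*} [LinearOrder I] (b : Basis I R M)
    {k : ℕ} {w : ⋀[R]^k M}
    (h : ∀ a : Fin k → I, pairingDual R M k (ιMulti R k (b.coord ∘ a)) w = 0) : w = 0 :=
  (b.exteriorPower k).ext_elem fun s => by
    rw [basis_repr_apply, map_zero, Finsupp.zero_apply]
    exact h _

end exteriorPower

namespace Module.Basis

open exteriorPower

variable {R M I : Type*} [CommRing R] [AddCommGroup M] [Module R M] (b : Basis I R M)

noncomputable def pluckerCoord (i j : I) : Dual R (⋀[R]^2 M) :=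
  pairingDual R M 2 (ιMulti R 2 ![b.coord i, b.coord j])

theorem pluckerCoord_swap (i j : I) : b.pluckerCoord j i = -b.pluckerCoord i j := by
  have : ![b.coord j, b.coord i] = ![b.coord i, b.coord j] ∘ Equiv.swap 0 1 := by
    ext k : 1
    fin_cases k <;> rfl
  rw [pluckerCoord, pluckerCoord, this, AlternatingMap.map_swap _ _ zero_ne_one, map_neg]

theorem coord_comp_of_apply_eq {σ : Equiv.Perm I} {f : M →ₗ[R] M} (hf : ∀ i, f (b i) = b (σ i))
    (i : I) : b.coord (σ i) ∘ₗ f = b.coord i :=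
  b.ext fun k => by simp [hf, Finsupp.single_apply_left σ.injective]

theorem pluckerCoord_map {σ : Equiv.Perm I} {f : M →ₗ[R] M} (hf : ∀ i, f (b i) = b (σ i))
    (i j : I) (w : ⋀[R]^2 M) : b.pluckerCoord (σ i) (σ j) (map 2 f w) = b.pluckerCoord i j w := by
  rw [pluckerCoord, pairingDual_ιMulti_map]
  congr 3
  ext k : 1
  fin_cases k <;> exact b.coord_comp_of_apply_eq hf _

theorem eq_zero_of_pluckerCoord_eq_zero [LinearOrder I] {w : ⋀[R]^2 M}
    (h : ∀ i j, b.pluckerCoord i j w = 0) : w = 0 :=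
  eq_zero_of_pairingDual_coord_eq_zero b fun a => by
    have : b.coord ∘ a = ![b.coord (a 0), b.coord (a 1)] := by
      ext k : 1
      fin_cases k <;> rfl
    rw [this]
    exact h _ _

theorem rank_eqLocus_exteriorSquare_map_le [IsAddTorsionFree R] [StrongRankCondition R]
    [Fintype I] [LinearOrder I] {σ : Equiv.Perm I} {f : M →ₗ[R] M} (hf : ∀ i, f (b i) = b (σ i))
    {x : I} (hx : σ x ≠ x) :
    Module.rank R (LinearMap.eqLocus (map 2 f) LinearMap.id)
      ≤ ((Fintype.card I - 1).choose 2 : ℕ) := by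
  let K := {p ∈ Finset.univ.erase x ×ˢ Finset.univ.erase x | p.1 < p.2}
  let Ψ : ⋀[R]^2 M →ₗ[R] (K → R) := LinearMap.pi fun p => b.pluckerCoord p.1.1 p.1.2
  have hinj : Function.Injective (Ψ ∘ₗ (LinearMap.eqLocus (map 2 f) LinearMap.id).subtype) := by
    refine (injective_iff_map_eq_zero _).mpr ?_
    rintro ⟨w, hw⟩ hΨ
    have hanti (i j : I) : b.pluckerCoord j i w = -b.pluckerCoord i j w := by
      rw [pluckerCoord_swap, LinearMap.neg_apply]
    have hinv (i j : I) : b.pluckerCoord (σ i) (σ j) w = b.pluckerCoord i j w := by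
      rw [← b.pluckerCoord_map hf i j w, show map 2 f w = w from hw]
    have hK (i j : I) (hij : i < j) (hi : i ≠ x) (hj : j ≠ x) : b.pluckerCoord i j w = 0 :=
      congr_fun hΨ ⟨(i, j), by simp [K, hi, hj, hij]⟩
    exact Subtype.ext <| b.eq_zero_of_pluckerCoord_eq_zero <|
      eq_zero_of_antisymm_of_perm_invariant hx hanti hinv (eq_zero_of_antisymm_of_lt hanti hK)
  have hK : K.card = (Fintype.card I - 1).choose 2 := by
    rw [Finset.card_product_filter_lt, Finset.card_erase_of_mem (Finset.mem_univ x),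
      Finset.card_univ]
  simpa [rank_fun', hK] using LinearMap.lift_rank_le_of_injective _ hinj

end Module.Basis

theorem permLinearMap_basisFun (n : ℕ) (π : Equiv.Perm (Fin n)) (i : Fin n) :
    permLinearMap n π (Pi.basisFun ℤ (Fin n) i) = Pi.basisFun ℤ (Fin n) (π i) := by
  ext j
  simp [permLinearMap, LinearMap.funLeft_apply, Pi.single_apply, Equiv.symm_apply_eq]

theorem rank_fix_extSquare_lt_general (n : ℕ)
    (π : Equiv.Perm (Fin n)) (hπ : π ≠ 1) :
    Module.rank ℤ
        ↥(LinearMap.eqLocus (ExteriorAlgebra.map (permLinearMap n π)).toLinearMap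
            LinearMap.id ⊓ ⋀[ℤ]^2 (Fin n → ℤ))
      < (((n - 1) * (n - 2) / 2 + 1 : ℕ) : Cardinal) := by
  obtain ⟨x, hx⟩ : ∃ x, π x ≠ x := by simpa [Equiv.ext_iff] using hπ
  rw [exteriorPower.rank_eqLocus_inf_exteriorPower]
  calc _ ≤ (((Fintype.card (Fin n) - 1).choose 2 : ℕ) : Cardinal) :=
        (Pi.basisFun ℤ (Fin n)).rank_eqLocus_exteriorSquare_map_le (permLinearMap_basisFun n π) hx
    _ < _ := by
        rw [Fintype.card_fin, Nat.choose_two_right]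
        exact_mod_cast Nat.lt_succ_self _

theorem rank_fix_extSquare_lt (n : ℕ) (hn : 3 ≤ n)
    (π : Equiv.Perm (Fin n)) (hπ : π ≠ 1) :
    Module.rank ℤ
        ↥(LinearMap.eqLocus (ExteriorAlgebra.map (permLinearMap n π)).toLinearMap
            LinearMap.id ⊓ ⋀[ℤ]^2 (Fin n → ℤ))
      < (((n - 1) * (n - 2) / 2 + 1 : ℕ) : Cardinal) :=
  rank_fix_extSquare_lt_general n π hπ
end

section
/- Let n ≥ 3 and let π be a non-identity permutation of {1,…,n}. Consider the action of the cyclic group C_π = ⟨π⟩ on the set of ordered pairs {(i,j) : 1 ≤ i,j ≤ n, i ≠ j} given by π·(i,j) = (π(i),π(j)). Then the number of orbits of this action is at most n² − 3n + 3. -/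
theorem card_orbits_on_distinct_pairs_le (n : ℕ) (hn : 3 ≤ n)
    (π : Equiv.Perm (Fin n)) (hπ : π ≠ 1) :
    Set.ncard {O : Set (Fin n × Fin n) |
        ∃ p : Fin n × Fin n, p.1 ≠ p.2 ∧
          O = Set.range fun m : ℤ => ((π ^ m) p.1, (π ^ m) p.2)}
      ≤ n ^ 2 - 3 * n + 3 := by
  classical
  obtain ⟨i, hi⟩ : ∃ i, π i ≠ i := by
    by_contra h
    push_neg at h
    exact hπ (Equiv.ext h)
  set j0 := π i with hj0
  have hj0i : j0 ≠ i := hi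
  set orb : Fin n × Fin n → Set (Fin n × Fin n) :=
    fun p => Set.range fun m : ℤ => ((π ^ m) p.1, (π ^ m) p.2) with horb
  have key : ∀ p : Fin n × Fin n, orb (π p.1, π p.2) = orb p := by
    intro p
    ext q
    simp only [horb, Set.mem_range]
    constructor
    · rintro ⟨m, rfl⟩
      exact ⟨m + 1, by simp [zpow_add_one, Equiv.Perm.mul_apply]⟩
    · rintro ⟨m, rfl⟩
      refine ⟨m - 1, ?_⟩
      simp [zpow_sub_one, Equiv.Perm.mul_apply]
  set S1 : Set (Fin n × Fin n) := {p | p.1 = j0 ∧ p.2 ≠ j0} with hS1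
  set S2 : Set (Fin n × Fin n) := {p | p.1 ≠ i ∧ p.1 ≠ j0 ∧ p.2 ≠ p.1 ∧ p.2 ≠ i} with hS2
  have hsub : {O : Set (Fin n × Fin n) |
        ∃ p : Fin n × Fin n, p.1 ≠ p.2 ∧
          O = Set.range fun m : ℤ => ((π ^ m) p.1, (π ^ m) p.2)} ⊆ orb '' (S1 ∪ S2) := by
    rintro O ⟨p, hp, rfl⟩
    have : ∃ q ∈ S1 ∪ S2, orb q = orb p := by
      by_cases h1 : p.1 = j0
      · exact ⟨p, Or.inl ⟨h1, fun h => hp (h1.trans h.symm)⟩, rfl⟩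
      by_cases h2 : p.1 = i
      · -- move once: (j0, π p.2) ∈ S1
        refine ⟨(π p.1, π p.2), Or.inl ⟨by rw [h2, ← hj0], ?_⟩, key p⟩
        intro h
        exact hp (h2.trans (π.injective (h.trans hj0)).symm)
      by_cases h3 : p.2 = i
      · -- p = (a, i), a ≠ i, a ≠ j0
        by_cases h4 : π p.1 = i
        · -- move twice: (j0, π j0) ∈ S1
          refine ⟨(π (π p.1), π (π p.2)), Or.inl ⟨?_, ?_⟩,
            (key (π p.1, π p.2)).trans (key p)⟩
          · show π (π p.1) = j0
            rw [h4, ← hj0]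
          · show π (π p.2) ≠ j0
            rw [h3]
            intro h
            exact hj0i (π.injective (h.trans hj0))
        · -- move once: (π a, j0) ∈ S2
          refine ⟨(π p.1, π p.2), Or.inr ⟨h4, ?_, ?_, ?_⟩, key p⟩
          · show π p.1 ≠ j0
            intro h; exact h2 (π.injective (h.trans hj0))
          · show π p.2 ≠ π p.1
            intro h; exact hp (π.injective h).symm
          · show π p.2 ≠ i
            rw [h3]; exact hi
      · exact ⟨p, Or.inr ⟨h2, h1, Ne.symm hp, h3⟩, rfl⟩
    obtain ⟨q, hq, hq'⟩ := this
    exact ⟨q, hq, hq'⟩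
  have hcard1 : S1.ncard ≤ n - 1 := by
    have : ({j0} : Set (Fin n))ᶜ.ncard = n - 1 := by
      have h := Set.ncard_add_ncard_compl ({j0} : Set (Fin n))
      rw [Set.ncard_singleton, Nat.card_eq_fintype_card, Fintype.card_fin] at h
      omega
    rw [← this]
    refine Set.ncard_le_ncard_of_injOn Prod.snd ?_ ?_
    · rintro ⟨a, b⟩ ⟨ha, hb⟩; exact hb
    · rintro ⟨a, b⟩ ⟨ha, hb⟩ ⟨a', b'⟩ ⟨ha', hb'⟩ h
      simp only at h
      have : a = a' := ha.trans ha'.symm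
      simp [Prod.ext_iff, this, h]
  have hcard2 : S2.ncard ≤ (n - 2) * (n - 2) := by
    set C : Set (Fin n) := {x | x ≠ i ∧ x ≠ j0} with hC
    have hCcard : C.ncard = n - 2 := by
      have hCc : C = ({i, j0} : Set (Fin n))ᶜ := by
        ext x; simp [hC, and_comm]
      have h2 : ({i, j0} : Set (Fin n)).ncard = 2 := by
        rw [Set.ncard_insert_of_notMem (by simp [Ne.symm hj0i]), Set.ncard_singleton]
      have h := Set.ncard_add_ncard_compl ({i, j0} : Set (Fin n))
      rw [h2, Nat.card_eq_fintype_card, Fintype.card_fin] at h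
      rw [hCc]; omega
    have hprod : (C ×ˢ C).ncard = (n - 2) * (n - 2) := by
      rw [← Nat.card_coe_set_eq, Nat.card_congr (Equiv.Set.prod C C), Nat.card_prod,
        Nat.card_coe_set_eq, hCcard]
    rw [← hprod]
    refine Set.ncard_le_ncard_of_injOn
      (fun p => (p.1, if p.2 = j0 then p.1 else p.2)) ?_ ?_
    · rintro ⟨a, b⟩ ⟨ha1, ha2, hb1, hb2⟩
      refine ⟨⟨ha1, ha2⟩, ?_⟩
      dsimp only
      split_ifs with hb
      · exact ⟨ha1, ha2⟩
      · exact ⟨hb2, hb⟩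
    · rintro ⟨a, b⟩ ⟨ha1, ha2, hb1, hb2⟩ ⟨a', b'⟩ ⟨ha1', ha2', hb1', hb2'⟩ h
      simp only [Prod.mk.injEq] at h
      obtain ⟨rfl, h2⟩ := h
      by_cases hb : b = j0 <;> by_cases hb' : b' = j0
      · simp [hb, hb']
      · rw [if_pos hb, if_neg hb'] at h2; exact absurd h2.symm hb1'
      · rw [if_neg hb, if_pos hb'] at h2; exact absurd h2 hb1
      · rw [if_neg hb, if_neg hb'] at h2; simp [h2]
  calc Set.ncard {O : Set (Fin n × Fin n) |
        ∃ p : Fin n × Fin n, p.1 ≠ p.2 ∧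
          O = Set.range fun m : ℤ => ((π ^ m) p.1, (π ^ m) p.2)}
      ≤ (orb '' (S1 ∪ S2)).ncard := Set.ncard_le_ncard hsub (Set.toFinite _)
    _ ≤ (S1 ∪ S2).ncard := Set.ncard_image_le (Set.toFinite _)
    _ ≤ S1.ncard + S2.ncard := Set.ncard_union_le _ _
    _ ≤ (n - 1) + (n - 2) * (n - 2) := Nat.add_le_add hcard1 hcard2
    _ ≤ n ^ 2 - 3 * n + 3 := by
        obtain ⟨k, rfl⟩ : ∃ k, n = k + 3 := ⟨n - 3, by omega⟩
        have h1 : (k + 3) ^ 2 = k * k + 6 * k + 9 := by ring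
        have h2 : (k + 3 - 2) * (k + 3 - 2) = k * k + 2 * k + 1 := by
          have hk : k + 3 - 2 = k + 1 := rfl
          rw [hk]; ring
        omega
end

section
/- Let 𝔽 be a field, let n ≥ 3, and let λ : ℤ^n × ℤ^n → 𝔽∖{0} be an alternating bicharacter (λ is multiplicative in each argument and λ(γ,γ) = 1 for all γ). Suppose that the subgroup Λ of 𝔽* generated by the values of λ is torsion-free of rank at least (n−1)(n−2)/2 + 1 (that is, Λ is torsion-free and contains (n−1)(n−2)/2 + 1 multiplicatively independent elements). Then the radical of λ is trivial: if γ ∈ ℤ^n satisfies λ(γ,γ') = 1 for all γ' ∈ ℤ^n, then γ = 0. -/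
private lemma pair_lt_inj {α : Type*} [LinearOrder α] [DecidableEq α] {a b c d : α}
    (hab : a < b) (hcd : c < d) (h : ({a, b} : Finset α) = {c, d}) : a = c ∧ b = d := by
  have ha : a = c ∨ a = d := by
    have : a ∈ ({c, d} : Finset α) := by rw [← h]; simp
    simpa using this
  have hb : b = c ∨ b = d := by
    have : b ∈ ({c, d} : Finset α) := by rw [← h]; simp
    simpa using this
  have hc : c = a ∨ c = b := by
    have : c ∈ ({a, b} : Finset α) := by rw [h]; simp
    simpa using this
  rcases ha with rfl | rfl
  · rcases hb with rfl | rfl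
    · exact absurd hab (lt_irrefl _)
    · exact ⟨rfl, rfl⟩
  · rcases hc with rfl | rfl
    · exact absurd hcd (lt_irrefl _)
    · exact absurd (hab.trans hcd) (lt_irrefl _)

theorem radical_trivial_of_large_value_group (F : Type*) [Field F]
    (n : ℕ) (hn : 3 ≤ n) (lam : (Fin n → ℤ) → (Fin n → ℤ) → Fˣ)
    (hadd₁ : ∀ γ δ γ' : Fin n → ℤ, lam (γ + δ) γ' = lam γ γ' * lam δ γ')
    (hadd₂ : ∀ γ γ' δ' : Fin n → ℤ, lam γ (γ' + δ') = lam γ γ' * lam γ δ')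
    (halt : ∀ γ : Fin n → ℤ, lam γ γ = 1)
    (htf : ∀ u ∈ Subgroup.closure
        (Set.range fun pq : (Fin n → ℤ) × (Fin n → ℤ) => lam pq.1 pq.2),
      ∀ k : ℕ, 0 < k → u ^ k = 1 → u = 1)
    (hrank : ∃ g : Fin ((n - 1) * (n - 2) / 2 + 1) → Fˣ,
        (∀ s, g s ∈ Subgroup.closure
          (Set.range fun pq : (Fin n → ℤ) × (Fin n → ℤ) => lam pq.1 pq.2)) ∧
        ∀ a : Fin ((n - 1) * (n - 2) / 2 + 1) → ℤ, (∏ s, g s ^ a s) = 1 → a = 0) :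
    ∀ γ : Fin n → ℤ, (∀ γ' : Fin n → ℤ, lam γ γ' = 1) → γ = 0 := by
  classical
  obtain ⟨g, hgmem, hgind⟩ := hrank
  intro γ hγ
  by_contra hne
  obtain ⟨k, hk⟩ : ∃ k, γ k ≠ 0 := by
    by_contra h
    push_neg at h
    exact hne (funext h)
  -- basic consequences
  have hzero₂ : ∀ δ : Fin n → ℤ, lam δ 0 = 1 := by
    intro δ
    have h := hadd₂ δ 0 0
    rw [add_zero] at h
    have h2 : lam δ 0 * lam δ 0 = lam δ 0 * 1 := by rw [mul_one]; exact h.symm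
    exact mul_left_cancel h2
  have hzero₁ : ∀ δ : Fin n → ℤ, lam 0 δ = 1 := by
    intro δ
    have h := hadd₁ 0 0 δ
    rw [add_zero] at h
    have h2 : lam 0 δ * lam 0 δ = lam 0 δ * 1 := by rw [mul_one]; exact h.symm
    exact mul_left_cancel h2
  -- additive hom packaging
  let L2 : (Fin n → ℤ) → (Fin n → ℤ) →+ Additive Fˣ := fun δ =>
    { toFun := fun x => Additive.ofMul (lam δ x)
      map_zero' := congrArg Additive.ofMul (hzero₂ δ)
      map_add' := fun x y => congrArg Additive.ofMul (hadd₂ δ x y) }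
  let L1 : (Fin n → ℤ) → (Fin n → ℤ) →+ Additive Fˣ := fun δ =>
    { toFun := fun x => Additive.ofMul (lam x δ)
      map_zero' := congrArg Additive.ofMul (hzero₁ δ)
      map_add' := fun x y => congrArg Additive.ofMul (hadd₁ x y δ) }
  set e : Fin n → (Fin n → ℤ) := fun i => Pi.single i 1 with he
  have hrepr : ∀ x : Fin n → ℤ, x = ∑ i, x i • e i := by
    intro x
    have h1 : ∀ i, Pi.single i (x i) = x i • e i := by
      intro i
      funext j
      rcases eq_or_ne j i with rfl | hji
      · simp [he]
      · simp [he, Pi.single_eq_of_ne hji]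
    calc x = ∑ i, Pi.single i (x i) := (Finset.univ_sum_single x).symm
    _ = ∑ i, x i • e i := Finset.sum_congr rfl fun i _ => h1 i
  -- bridging lemmas between the two (definitionally equal) ℤ-scalar actions on Additive Fˣ
  have hdist : ∀ {ι : Type} (s : Finset ι) (c : ℤ) (f : ι → Additive Fˣ),
      c • ∑ i ∈ s, f i = ∑ i ∈ s, c • f i := fun s c f => (Finset.sum_zsmul f s c).symm
  have hsmulsmul : ∀ (c d : ℤ) (x : Additive Fˣ), c • d • x = (c * d) • x :=
    fun c d x => (mul_zsmul x c d).symm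
  have hsmulcomm : ∀ (c d : ℤ) (x : Additive Fˣ), c • d • x = d • c • x := by
    intro c d x
    rw [← mul_zsmul, ← mul_zsmul, mul_comm]
  have hsum_smul : ∀ {ι : Type} (s : Finset ι) (c : ι → ℤ) (x : Additive Fˣ),
      (∑ i ∈ s, c i) • x = ∑ i ∈ s, c i • x := by
    intro ι s c x
    have h := map_sum (zmultiplesHom (Additive Fˣ) x) c s
    simpa only [zmultiplesHom_apply] using h
  have hsmul_add : ∀ (c : ℤ) (x y : Additive Fˣ), c • (x + y) = c • x + c • y := by
    intro c x y
    rw [zsmul_add]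
  set a : Fin n → Fin n → Additive Fˣ := fun i j => Additive.ofMul (lam (e i) (e j)) with ha
  -- expansion of lam in terms of the a i j
  have hexp : ∀ x y : Fin n → ℤ,
      Additive.ofMul (lam x y) = ∑ i, ∑ j, (x i * y j) • a i j := by
    intro x y
    have h1 : Additive.ofMul (lam x y) = ∑ i, x i • Additive.ofMul (lam (e i) y) := by
      have : Additive.ofMul (lam x y) = L1 y (∑ i, x i • e i) := by
        rw [← hrepr x]; rfl
      rw [this, map_sum]
      exact Finset.sum_congr rfl fun i _ => map_zsmul (L1 y) (x i) (e i)
    rw [h1]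
    refine Finset.sum_congr rfl fun i _ => ?_
    have h2 : Additive.ofMul (lam (e i) y) = ∑ j, y j • a i j := by
      have : Additive.ofMul (lam (e i) y) = L2 (e i) (∑ j, y j • e j) := by
        rw [← hrepr y]; rfl
      rw [this, map_sum]
      exact Finset.sum_congr rfl fun j _ => map_zsmul (L2 (e i)) (y j) (e j)
    rw [h2, hdist]
    exact Finset.sum_congr rfl fun j _ => hsmulsmul (x i) (y j) (a i j)
  -- diagonal and antisymmetry
  have haii : ∀ i, a i i = 0 := fun i => congrArg Additive.ofMul (halt (e i))
  have hskew : ∀ i j, a i j = - a j i := by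
    intro i j
    have h := halt (e i + e j)
    rw [hadd₁, hadd₂, hadd₂, halt (e i), halt (e j), one_mul, mul_one] at h
    have h2 : a i j + a j i = 0 := congrArg Additive.ofMul h
    exact eq_neg_of_add_eq_zero_left h2
  -- radical relations
  have hrel : ∀ j, ∑ i, γ i • a i j = 0 := by
    intro j
    have h1 := hexp γ (e j)
    rw [hγ (e j)] at h1
    have h2 : (0 : Additive Fˣ) = ∑ i, ∑ j', (γ i * e j j') • a i j' := h1
    rw [h2]
    refine Finset.sum_congr rfl fun i _ => ?_
    rw [Finset.sum_eq_single j]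
    · have : e j j = 1 := by simp [he]
      rw [this, mul_one]
    · intro b _ hbj
      have : e j b = 0 := by simp [he, Pi.single_eq_of_ne hbj]
      rw [this, mul_zero, zero_smul]
    · intro habs
      exact absurd (Finset.mem_univ j) habs
  -- the reduced index type
  let T := {p : Fin n × Fin n // p.1 < p.2 ∧ p.1 ≠ k ∧ p.2 ≠ k}
  let β : T → Additive Fˣ := fun t => a t.1.1 t.1.2
  let M := Submodule.span ℤ (Set.range β)
  have hmem : ∀ i j : Fin n, i ≠ k → j ≠ k → a i j ∈ M := by
    intro i j hik hjk
    rcases lt_trichotomy i j with h | rfl | h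
    · exact Submodule.subset_span ⟨⟨(i, j), ⟨h, hik, hjk⟩⟩, rfl⟩
    · rw [haii i]; exact zero_mem M
    · rw [hskew i j]
      exact neg_mem (Submodule.subset_span ⟨⟨(j, i), ⟨h, hjk, hik⟩⟩, rfl⟩)
  have hka : ∀ j, j ≠ k → γ k • a k j ∈ M := by
    intro j hjk
    have h0 := hrel j
    have h1 : γ k • a k j = - ∑ i ∈ Finset.univ.erase k, γ i • a i j := by
      have h2 := Finset.add_sum_erase Finset.univ (fun i => γ i • a i j) (Finset.mem_univ k)
      rw [h0] at h2
      exact eq_neg_of_add_eq_zero_left h2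
    rw [h1]
    refine neg_mem (Submodule.sum_mem _ fun i hi => ?_)
    exact Submodule.smul_mem _ _ (hmem i j (Finset.ne_of_mem_erase hi) hjk)
  have hak : ∀ i j : Fin n, γ k • a i j ∈ M := by
    intro i j
    rcases eq_or_ne i k with rfl | hik
    · rcases eq_or_ne j i with rfl | hji
      · rw [haii]; exact Submodule.smul_mem M _ (zero_mem M)
      · exact hka j hji
    · rcases eq_or_ne j k with rfl | hjk
      · have : a i j = - a j i := hskew i j
        rw [this, zsmul_neg]
        exact neg_mem (hka i hik)
      · exact Submodule.smul_mem _ _ (hmem i j hik hjk)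
  -- every element of the value group, raised to γ k, lands in M
  have hmemM : ∀ u ∈ Subgroup.closure
      (Set.range fun pq : (Fin n → ℤ) × (Fin n → ℤ) => lam pq.1 pq.2),
      γ k • Additive.ofMul u ∈ M := by
    intro u hu
    refine Subgroup.closure_induction ?_ ?_ ?_ ?_ hu
    · rintro x ⟨⟨p, q⟩, rfl⟩
      show γ k • Additive.ofMul (lam p q) ∈ M
      rw [hexp p q, hdist]
      refine Submodule.sum_mem _ fun i _ => ?_
      rw [hdist]
      refine Submodule.sum_mem _ fun j _ => ?_
      rw [hsmulcomm]
      exact Submodule.smul_mem _ _ (hak i j)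
    · show γ k • (0 : Additive Fˣ) ∈ M
      rw [smul_zero]; exact zero_mem M
    · intro x y _ _ hx hy
      show γ k • (Additive.ofMul x + Additive.ofMul y) ∈ M
      rw [hsmul_add]
      exact add_mem hx hy
    · intro x _ hx
      show γ k • (- Additive.ofMul x) ∈ M
      rw [zsmul_neg]
      exact neg_mem hx
  -- exponent vectors for the g s
  have hv : ∀ s, ∃ v : T → ℤ, ∑ t, v t • β t = γ k • Additive.ofMul (g s) := by
    intro s
    exact (Submodule.mem_span_range_iff_exists_fun ℤ).mp (hmemM (g s) (hgmem s))
  choose v hvs using hv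
  -- cardinality bound on T
  have hcardT : Fintype.card T ≤ (n - 1) * (n - 2) / 2 := by
    have hinjf : ∀ t : T, (⟨t.1.1, t.2.2.1⟩ : {i : Fin n // i ≠ k}) ≠ ⟨t.1.2, t.2.2.2⟩ := by
      intro t h
      exact absurd (congrArg Subtype.val h) (ne_of_lt t.2.1)
    let f : T → {s : Finset {i : Fin n // i ≠ k} // s.card = 2} := fun t =>
      ⟨{⟨t.1.1, t.2.2.1⟩, ⟨t.1.2, t.2.2.2⟩}, Finset.card_pair (hinjf t)⟩
    have hfinj : Function.Injective f := by
      intro t t' h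
      have h2 : ({⟨t.1.1, t.2.2.1⟩, ⟨t.1.2, t.2.2.2⟩} : Finset {i : Fin n // i ≠ k})
          = {⟨t'.1.1, t'.2.2.1⟩, ⟨t'.1.2, t'.2.2.2⟩} := congrArg Subtype.val h
      have hlt : (⟨t.1.1, t.2.2.1⟩ : {i : Fin n // i ≠ k}) < ⟨t.1.2, t.2.2.2⟩ := t.2.1
      have hlt' : (⟨t'.1.1, t'.2.2.1⟩ : {i : Fin n // i ≠ k}) < ⟨t'.1.2, t'.2.2.2⟩ := t'.2.1
      obtain ⟨hA, hB⟩ := pair_lt_inj hlt hlt' h2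
      have hA' : t.1.1 = t'.1.1 := congrArg Subtype.val hA
      have hB' : t.1.2 = t'.1.2 := congrArg Subtype.val hB
      exact Subtype.ext (Prod.ext hA' hB')
    have hcard1 : Fintype.card {i : Fin n // i ≠ k} = n - 1 := by
      simp [Fintype.card_subtype_compl]
    have h3 := Fintype.card_le_of_injective f hfinj
    rw [Fintype.card_finset_len, hcard1, Nat.choose_two_right] at h3
    have : n - 1 - 1 = n - 2 := by omega
    rw [this] at h3
    exact h3
  -- the v s are linearly dependent over ℤ
  have hnotind : ¬ LinearIndependent ℤ v := by
    intro hind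
    have h1 := hind.fintype_card_le_finrank
    rw [Module.finrank_pi, Fintype.card_fin] at h1
    omega
  obtain ⟨c, hc0, s0, hs0⟩ := Fintype.not_linearIndependent_iff.mp hnotind
  -- derive a multiplicative relation among the g s
  have hsum : ∑ s, (γ k * c s) • Additive.ofMul (g s) = 0 := by
    have step1 : ∀ s, (γ k * c s) • Additive.ofMul (g s) = c s • ∑ t, v s t • β t := by
      intro s
      rw [hvs s, hsmulsmul, mul_comm]
    calc ∑ s, (γ k * c s) • Additive.ofMul (g s)
        = ∑ s, c s • ∑ t, v s t • β t := Finset.sum_congr rfl fun s _ => step1 s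
      _ = ∑ s, ∑ t, (c s * v s t) • β t := by
          refine Finset.sum_congr rfl fun s _ => ?_
          rw [hdist]
          exact Finset.sum_congr rfl fun t _ => hsmulsmul (c s) (v s t) (β t)
      _ = ∑ t, ∑ s, (c s * v s t) • β t := Finset.sum_comm
      _ = ∑ t, (∑ s, c s * v s t) • β t :=
          Finset.sum_congr rfl fun t _ => (hsum_smul _ _ _).symm
      _ = 0 := by
          refine Finset.sum_eq_zero fun t _ => ?_
          have h4 : (∑ s, c s • v s) t = 0 := by rw [hc0]; rfl
          rw [Finset.sum_apply] at h4
          have h5 : ∑ s, c s * v s t = 0 := by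
            rw [← h4]
            exact Finset.sum_congr rfl fun s _ => rfl
          rw [h5, zero_smul]
  have hprod : ∏ s, g s ^ (γ k * c s) = 1 := by
    have h6 : Additive.ofMul (∏ s, g s ^ (γ k * c s)) = Additive.ofMul (1 : Fˣ) := by
      rw [ofMul_prod]
      calc ∑ s, Additive.ofMul (g s ^ (γ k * c s))
          = ∑ s, (γ k * c s) • Additive.ofMul (g s) :=
            Finset.sum_congr rfl fun s _ => ofMul_zpow _ _
        _ = 0 := hsum
    exact Additive.ofMul.injective h6
  have h7 := hgind (fun s => γ k * c s) hprod
  have h8 : γ k * c s0 = 0 := congrFun h7 s0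
  rcases mul_eq_zero.mp h8 with h9 | h9
  · exact hk h9
  · exact hs0 h9
end

section
/- Let 𝔽 be a field and let λ : ℤ^n × ℤ^n → 𝔽∖{0} be an alternating bicharacter whose value group Λ (the subgroup of 𝔽* generated by all λ(γ,γ')) is torsion-free. Let Z = {γ ∈ ℤ^n : λ(γ,γ') = 1 for all γ' ∈ ℤ^n} be the radical of λ. Then the rank of Λ is at most C(n − rank(Z), 2) = (n − rank(Z))(n − rank(Z) − 1)/2. -/
/-!
Over `ℤ` the radical `Z` of an alternating bicharacter `λ` is saturated: if `m γ ∈ Z` with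
`m ≠ 0` then every `λ(γ, γ')` is an `m`-th root of unity in the value group, hence trivial by
torsion-freeness. So `ℤⁿ ⧸ Z` is free of rank `n - rank Z`, and `λ` descends to an alternating
bilinear map on it, i.e. to a linear map out of `⋀² (ℤⁿ ⧸ Z)`, which is free of rank
`C(n - rank Z, 2)`. The value group lies in the image of that map.
-/

lemma LinearIndependent.card_le_finrank_of_forall_mem_range {R N P ι : Type*} [CommRing R]
    [StrongRankCondition R] [AddCommGroup N] [Module R N] [AddCommGroup P] [Module R P]
    [Module.Finite R P] [Fintype ι] {v : ι → N} (hv : LinearIndependent R v) {f : P →ₗ[R] N}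
    (hmem : ∀ i, v i ∈ LinearMap.range f) : Fintype.card ι ≤ Module.finrank R P := by
  choose w hw using hmem
  refine (LinearIndependent.of_comp f (v := w) ?_).fintype_card_le_finrank
  simpa only [Function.comp_def, hw] using hv

lemma LinearMap.isTorsionFree_quotient_ker {R M N P : Type*} [CommRing R] [IsDomain R]
    [AddCommGroup M] [Module R M] [AddCommGroup N] [Module R N] [AddCommGroup P] [Module R P]
    (B : M →ₗ[R] N →ₗ[R] P) (htf : ∀ x y, ∀ r : R, r • B x y = 0 → r = 0 ∨ B x y = 0) :
    Module.IsTorsionFree R (M ⧸ ker B) := by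
  refine .of_smul_eq_zero ?_
  rintro r ⟨x⟩ hrx
  rw [Submodule.Quotient.quot_mk_eq_mk, ← Submodule.Quotient.mk_smul,
    Submodule.Quotient.mk_eq_zero, mem_ker] at hrx
  refine or_iff_not_imp_left.mpr fun hr => (Submodule.Quotient.mk_eq_zero _).mpr (ext fun y => ?_)
  exact (htf x y r (by simpa using congr($hrx y))).resolve_left hr

namespace LinearMap.IsAlt

variable {R M N : Type*} [CommRing R] [AddCommGroup M] [Module R M] [AddCommGroup N] [Module R N]
  {B : M →ₗ[R] M →ₗ[R] N}

def toAlternatingMap (hB : B.IsAlt) : M [⋀^Fin 2]→ₗ[R] N where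
  toFun v := B (v 0) (v 1)
  map_update_add' v i x y := by
    fin_cases i <;> simp
  map_update_smul' v i c x := by
    fin_cases i <;> simp
  map_eq_zero_of_eq' v i j hij hne := by
    fin_cases i <;> fin_cases j <;> simp_all [hB.self_eq_zero]

lemma span_le_range_exteriorPower (hB : B.IsAlt) :
    Submodule.span R (Set.range fun p : M × M => B p.1 p.2) ≤
      range (exteriorPower.alternatingMapLinearEquiv hB.toAlternatingMap) := by
  rw [Submodule.span_le]
  rintro _ ⟨⟨x, y⟩, rfl⟩
  exact ⟨exteriorPower.ιMulti R 2 ![x, y], by simp [toAlternatingMap]⟩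

theorem card_le_choose_finrank [Nontrivial R] [StrongRankCondition R] [Module.Free R M]
    [Module.Finite R M] (hB : B.IsAlt) {ι : Type*} [Fintype ι] {v : ι → N}
    (hv : LinearIndependent R v)
    (hmem : ∀ i, v i ∈ Submodule.span R (Set.range fun p : M × M => B p.1 p.2)) :
    Fintype.card ι ≤ (Module.finrank R M).choose 2 := by
  rw [← exteriorPower.finrank_eq]
  exact hv.card_le_finrank_of_forall_mem_range fun i => hB.span_le_range_exteriorPower (hmem i)

lemma isAlt_liftQ₂_ker (hB : B.IsAlt) : (hB.isRefl.liftQ₂ B (ker B) le_rfl).IsAlt := by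
  rintro ⟨x⟩
  exact hB x

theorem card_le_choose_finrank_sub_finrank_ker [IsDomain R] [IsPrincipalIdealRing R]
    [Module.Finite R M] (hB : B.IsAlt)
    (htf : ∀ x y, ∀ r : R, r • B x y = 0 → r = 0 ∨ B x y = 0)
    {ι : Type*} [Fintype ι] {v : ι → N} (hv : LinearIndependent R v)
    (hmem : ∀ i, v i ∈ Submodule.span R (Set.range fun p : M × M => B p.1 p.2)) :
    Fintype.card ι ≤ (Module.finrank R M - Module.finrank R (ker B)).choose 2 := by
  have := B.isTorsionFree_quotient_ker htf
  rw [← Submodule.finrank_quotient]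
  refine hB.isAlt_liftQ₂_ker.card_le_choose_finrank hv fun i => Submodule.span_mono ?_ (hmem i)
  rintro _ ⟨⟨x, y⟩, rfl⟩
  exact ⟨(Submodule.Quotient.mk x, Submodule.Quotient.mk y), rfl⟩

end LinearMap.IsAlt

lemma Subgroup.ofMul_mem_span_of_mem_closure {G : Type*} [CommGroup G] {s : Set G} {u : G}
    (hu : u ∈ Subgroup.closure s) :
    Additive.ofMul u ∈ Submodule.span ℤ (Additive.toMul ⁻¹' s) := by
  rw [← Submodule.mem_toAddSubgroup, Submodule.span_int_eq_addSubgroupClosure,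
    ← Subgroup.toAddSubgroup_closure]
  exact hu

def bicharacterToBilin {G H : Type*} [AddCommGroup G] [CommGroup H] (lam : G → G → H)
    (hadd₁ : ∀ a b c, lam (a + b) c = lam a c * lam b c)
    (hadd₂ : ∀ a b c, lam a (b + c) = lam a b * lam a c) :
    G →ₗ[ℤ] G →ₗ[ℤ] Additive H :=
  AddMonoidHom.toIntLinearMap <| AddMonoidHom.mk'
    (fun a => (AddMonoidHom.mk' (fun c => Additive.ofMul (lam a c)) (hadd₂ a)).toIntLinearMap)
    fun a b => LinearMap.ext (hadd₁ a b)

@[simp]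
lemma bicharacterToBilin_apply {G H : Type*} [AddCommGroup G] [CommGroup H] (lam : G → G → H)
    (hadd₁ : ∀ a b c, lam (a + b) c = lam a c * lam b c)
    (hadd₂ : ∀ a b c, lam a (b + c) = lam a b * lam a c) (a c : G) :
    bicharacterToBilin lam hadd₁ hadd₂ a c = Additive.ofMul (lam a c) :=
  rfl

theorem rank_value_group_le_choose (F : Type*) [Field F]
    (n : ℕ) (lam : (Fin n → ℤ) → (Fin n → ℤ) → Fˣ)
    (hadd₁ : ∀ γ δ γ' : Fin n → ℤ, lam (γ + δ) γ' = lam γ γ' * lam δ γ')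
    (hadd₂ : ∀ γ γ' δ' : Fin n → ℤ, lam γ (γ' + δ') = lam γ γ' * lam γ δ')
    (halt : ∀ γ : Fin n → ℤ, lam γ γ = 1)
    (htf : ∀ u ∈ Subgroup.closure
        (Set.range fun pq : (Fin n → ℤ) × (Fin n → ℤ) => lam pq.1 pq.2),
      ∀ k : ℕ, 0 < k → u ^ k = 1 → u = 1) :
    ∀ (k : ℕ) (g : Fin k → Fˣ),
      (∀ s, g s ∈ Subgroup.closure
        (Set.range fun pq : (Fin n → ℤ) × (Fin n → ℤ) => lam pq.1 pq.2)) →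
      (∀ a : Fin k → ℤ, (∏ s, g s ^ a s) = 1 → a = 0) →
      k ≤ (n - Module.finrank ℤ
        ↥(Submodule.span ℤ {γ : Fin n → ℤ | ∀ γ' : Fin n → ℤ, lam γ γ' = 1})).choose 2 := by
  intro k g hg hindep
  set B := bicharacterToBilin lam hadd₁ hadd₂
  have hB : B.IsAlt := fun γ => congrArg Additive.ofMul (halt γ)
  have hradical : {γ | ∀ γ', lam γ γ' = 1} = (LinearMap.ker B : Set (Fin n → ℤ)) := by
    ext; simp [B, LinearMap.ext_iff]
  have hvalues : Additive.toMul ⁻¹' Set.range (fun pq : (Fin n → ℤ) × (Fin n → ℤ) => lam pq.1 pq.2)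
      = Set.range fun pq : (Fin n → ℤ) × (Fin n → ℤ) => B pq.1 pq.2 := by
    ext
    exact ⟨fun ⟨p, hp⟩ => ⟨p, congrArg Additive.ofMul hp⟩,
      fun ⟨p, hp⟩ => ⟨p, congrArg Additive.toMul hp⟩⟩
  have hvalues_torsionFree : ∀ x y, ∀ r : ℤ, r • B x y = 0 → r = 0 ∨ B x y = 0 := by
    intro x y r hr
    refine or_iff_not_imp_left.mpr fun hr0 => congrArg Additive.ofMul <|
      htf _ (Subgroup.subset_closure ⟨(x, y), rfl⟩) r.natAbs (Int.natAbs_pos.mpr hr0) ?_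
    exact pow_natAbs_eq_one.mpr (congrArg Additive.toMul hr)
  have hv : LinearIndependent ℤ fun s => Additive.ofMul (g s) :=
    Fintype.linearIndependent_iff.mpr fun a ha =>
      congrFun (hindep a (by simpa [← ofMul_zpow, ← ofMul_prod] using ha))
  have hmem s : Additive.ofMul (g s) ∈
      Submodule.span ℤ (Set.range fun p : (Fin n → ℤ) × (Fin n → ℤ) => B p.1 p.2) :=
    hvalues ▸ Subgroup.ofMul_mem_span_of_mem_closure (hg s)
  rw [hradical, Submodule.span_eq]
  simpa [Module.finrank_fin_fun] using
    hB.card_le_choose_finrank_sub_finrank_ker hvalues_torsionFree hv hmem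
end

section
/- Define three alternating bilinear forms on ℚ⁴ by α₁(x,y) = x₂y₁ − x₁y₂ + x₄y₃ − x₃y₄, α₂(x,y) = x₃y₁ − x₁y₃ + x₂y₄ − x₄y₂, and α₃(x,y) = x₄y₁ − x₁y₄ + x₃y₂ − x₂y₃. Then these three forms have no common isotropic subspace of dimension greater than one: if x,y ∈ ℚ⁴ satisfy α₁(x,y) = α₂(x,y) = α₃(x,y) = 0, then x and y are linearly dependent over ℚ. -/
theorem no_common_isotropic_plane_quaternionic_forms (x y : Fin 4 → ℚ)
    (h1 : x 1 * y 0 - x 0 * y 1 + x 3 * y 2 - x 2 * y 3 = 0)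
    (h2 : x 2 * y 0 - x 0 * y 2 + x 1 * y 3 - x 3 * y 1 = 0)
    (h3 : x 3 * y 0 - x 0 * y 3 + x 2 * y 1 - x 1 * y 2 = 0) :
    ¬ LinearIndependent ℚ ![x, y] := by
  intro h
  rw [LinearIndependent.pair_iff] at h
  have hsum : (x 0 * y 1 - x 1 * y 0)^2 + (x 0 * y 2 - x 2 * y 0)^2
      + (x 0 * y 3 - x 3 * y 0)^2 = 0 := by
    linear_combination (-(x 0 * y 1 - x 1 * y 0)) * h1
      + (-(x 0 * y 2 - x 2 * y 0)) * h2 + (-(x 0 * y 3 - x 3 * y 0)) * h3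
  have ha : x 0 * y 1 - x 1 * y 0 = 0 := by nlinarith [sq_nonneg (x 0 * y 1 - x 1 * y 0), sq_nonneg (x 0 * y 2 - x 2 * y 0), sq_nonneg (x 0 * y 3 - x 3 * y 0)]
  have hb : x 0 * y 2 - x 2 * y 0 = 0 := by nlinarith [sq_nonneg (x 0 * y 1 - x 1 * y 0), sq_nonneg (x 0 * y 2 - x 2 * y 0), sq_nonneg (x 0 * y 3 - x 3 * y 0)]
  have hc : x 0 * y 3 - x 3 * y 0 = 0 := by nlinarith [sq_nonneg (x 0 * y 1 - x 1 * y 0), sq_nonneg (x 0 * y 2 - x 2 * y 0), sq_nonneg (x 0 * y 3 - x 3 * y 0)]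
  have hd : x 2 * y 3 - x 3 * y 2 = 0 := by linarith
  have he : x 1 * y 3 - x 3 * y 1 = 0 := by linarith
  have hf : x 1 * y 2 - x 2 * y 1 = 0 := by linarith
  have key : ∀ i j : Fin 4, x i * y j - x j * y i = 0 := by
    intro i j
    fin_cases i <;> fin_cases j <;> simp <;> linarith
  by_cases hx : x = 0
  · obtain ⟨hs, -⟩ := h 1 0 (by simp [hx])
    exact one_ne_zero hs
  · obtain ⟨i, hi⟩ := Function.ne_iff.mp hx
    obtain ⟨-, ht⟩ := h (-(y i)) (x i) (by
      funext j
      have := key i j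
      simp only [Pi.add_apply, Pi.smul_apply, smul_eq_mul, Pi.zero_apply, neg_mul]
      linarith)
    exact hi ht
end

section
/- Let 𝕂 be a field and let ζ, μ, ν ∈ 𝕂∖{0} be multiplicatively independent (i.e. ζ^aμ^bν^c = 1 with a,b,c ∈ ℤ forces a = b = c = 0). Define alternating bilinear forms on ℤ⁴ by α₁(x,y) = x₂y₁ − x₁y₂ + x₄y₃ − x₃y₄, α₂(x,y) = x₃y₁ − x₁y₃ + x₂y₄ − x₄y₂, α₃(x,y) = x₄y₁ − x₁y₄ + x₃y₂ − x₂y₃, and define λ : ℤ⁴ × ℤ⁴ → 𝕂∖{0} by λ(γ,γ') = ζ^{α₁(γ,γ')} μ^{α₂(γ,γ')} ν^{α₃(γ,γ')}. Then for all γ,γ' ∈ ℤ⁴ that are ℤ-linearly independent, λ(γ,γ') ≠ 1; that is, the rank-4 quantum torus with commutation bicharacter λ has dimension one (while its λ-group is free of rank 3). -/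
theorem dimension_one_quantum_torus_of_rank_three_lambda_group
    (K : Type*) [Field K] (zeta mu nu : K)
    (hz : zeta ≠ 0) (hm : mu ≠ 0) (hn : nu ≠ 0)
    (hind : ∀ a b c : ℤ, zeta ^ a * mu ^ b * nu ^ c = 1 → a = 0 ∧ b = 0 ∧ c = 0)
    (γ γ' : Fin 4 → ℤ) (hli : LinearIndependent ℤ ![γ, γ']) :
    zeta ^ (γ 1 * γ' 0 - γ 0 * γ' 1 + γ 3 * γ' 2 - γ 2 * γ' 3) *
      mu ^ (γ 2 * γ' 0 - γ 0 * γ' 2 + γ 1 * γ' 3 - γ 3 * γ' 1) *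
      nu ^ (γ 3 * γ' 0 - γ 0 * γ' 3 + γ 2 * γ' 1 - γ 1 * γ' 2) ≠ 1 := by
  intro h
  obtain ⟨hA, hB, hC⟩ := hind _ _ _ h
  set r : ℤ := γ 0 * γ' 0 + γ 1 * γ' 1 + γ 2 * γ' 2 + γ 3 * γ' 3 with hr
  set n : ℤ := γ 0 ^ 2 + γ 1 ^ 2 + γ 2 ^ 2 + γ 3 ^ 2 with hn'
  have hrel : r • γ + (-n) • γ' = 0 := by
    funext i
    fin_cases i <;>
      simp only [Pi.add_apply, Pi.smul_apply, Pi.zero_apply, smul_eq_mul, hr, hn', Fin.isValue]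
    · show r * γ 0 + -n * γ' 0 = 0
      simp only [hr, hn']
      linear_combination (-(γ 1) : ℤ) * hA + (-(γ 2)) * hB + (-(γ 3)) * hC
    · show r * γ 1 + -n * γ' 1 = 0
      simp only [hr, hn']
      linear_combination (γ 0 : ℤ) * hA + (γ 3) * hB + (-(γ 2)) * hC
    · show r * γ 2 + -n * γ' 2 = 0
      simp only [hr, hn']
      linear_combination (-(γ 3) : ℤ) * hA + (γ 0) * hB + (γ 1) * hC
    · show r * γ 3 + -n * γ' 3 = 0
      simp only [hr, hn']
      linear_combination (γ 2 : ℤ) * hA + (-(γ 1)) * hB + (γ 0) * hC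
  obtain ⟨hr0, hn0⟩ := LinearIndependent.pair_iff.mp hli r (-n) hrel
  have hn0' : n = 0 := by omega
  have h0 : γ 0 = 0 ∧ γ 1 = 0 ∧ γ 2 = 0 ∧ γ 3 = 0 := by
    constructor
    · nlinarith [sq_nonneg (γ 0), sq_nonneg (γ 1), sq_nonneg (γ 2), sq_nonneg (γ 3)]
    constructor
    · nlinarith [sq_nonneg (γ 0), sq_nonneg (γ 1), sq_nonneg (γ 2), sq_nonneg (γ 3)]
    constructor
    · nlinarith [sq_nonneg (γ 0), sq_nonneg (γ 1), sq_nonneg (γ 2), sq_nonneg (γ 3)]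
    · nlinarith [sq_nonneg (γ 0), sq_nonneg (γ 1), sq_nonneg (γ 2), sq_nonneg (γ 3)]
  have hγ0 : γ = 0 := by
    funext i
    fin_cases i <;> simp [h0.1, h0.2.1, h0.2.2.1, h0.2.2.2]
  have := (LinearIndependent.pair_iff.mp hli 1 0 (by simp [hγ0])).1
  exact one_ne_zero this
end
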